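/- arXiv:1505.07911 — 7 statements merged into one kernel-verified Lean document; each statement's English description precedes it below -/
import Mathlib

section
/- In the multi-unit environment F = {X ⊆ N : |X| ≤ k} with k < n agents and values sorted v_1 > v_2 > … > v_n ≥ 0, the core revenue benchmark equals k·v_{k+1}, i.e., CoreRev(F,v) = k·v_{k+1}. -/
open Classical

noncomputable section

namespace CoreComp

/-- Total value of a set of agents. -/
def val {α : Type*} (v : α → ℝ) (X : Finset α) : ℝ := ∑ i ∈ X, v i

/-- Maximum welfare achievable by a feasible set contained in `T`. -/
def maxW {α : Type*} (F : Set (Finset α)) (v : α → ℝ) (T : Finset α) : ℝ :=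
  sSup {r | ∃ X ∈ F, X ⊆ T ∧ r = val v X}

/-- Coalition value function on `Option α`, where `none` is the auctioneer. -/
def w {α : Type*} (F : Set (Finset α)) (v : α → ℝ) (S : Finset (Option α)) : ℝ :=
  if none ∈ S then maxW F v S.eraseNone else 0

/-- The core of the associated cooperative game. -/
def Core {α : Type*} [Fintype α] (F : Set (Finset α)) (v : α → ℝ) :
    Set (Option α → ℝ) :=
  {u | (∀ i, 0 ≤ u i) ∧ (∑ i, u i) = w F v Finset.univ ∧
    ∀ S : Finset (Option α), w F v S ≤ ∑ i ∈ S, u i}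

/-- Core revenue benchmark: the minimum auctioneer utility over core imputations. -/
def CoreRev {α : Type*} [Fintype α] (F : Set (Finset α)) (v : α → ℝ) : ℝ :=
  sInf {r | ∃ u ∈ Core F v, r = u none}

end CoreComp

open CoreComp

/-- In the multi-unit environment `F = {X : |X| ≤ k}` with `k < n`
agents and strictly sorted nonnegative values `v 0 > v 1 > … > v (n-1)`, the core revenue
benchmark equals `k · v_{k+1}` (the `(k+1)`-st highest value, i.e. index `k`). -/
theorem multiunit_corerev {n k : ℕ} (hk : k < n) (v : Fin n → ℝ)
    (hsort : ∀ i j : Fin n, i < j → v j < v i) (hv : ∀ i, 0 ≤ v i) :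
    CoreRev {X : Finset (Fin n) | X.card ≤ k} v = (k : ℝ) * v ⟨k, hk⟩ := by
  set F : Set (Finset (Fin n)) := {X : Finset (Fin n) | X.card ≤ k} with hF
  set kk : Fin n := ⟨k, hk⟩ with hkk
  set g : Fin n → ℝ := fun i => max (v i - v kk) 0 with hg
  set topk : Finset (Fin n) := Finset.univ.filter (fun i => (i : ℕ) < k) with htopk
  set W : ℝ := ∑ i ∈ topk, v i with hW
  have hmemF : ∀ X : Finset (Fin n), X ∈ F ↔ X.card ≤ k := fun X => Iff.rfl
  have hg0 : ∀ i, 0 ≤ g i := fun i => le_max_right _ _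
  have hgi : ∀ i, v i ≤ v kk + g i := by
    intro i
    have h1 : v i - v kk ≤ g i := le_max_left _ _
    linarith
  have hvk0 : 0 ≤ v kk := hv kk
  have hmemtopk : ∀ i : Fin n, i ∈ topk ↔ (i : ℕ) < k := by
    intro i; simp [htopk]
  have hcard : topk.card = k := by
    have h1 : topk = Finset.Iio kk := by
      ext i; simp [htopk, Finset.mem_Iio, Fin.lt_def, hkk]
    rw [h1, Fin.card_Iio]
  have hgtop : ∀ i ∈ topk, g i = v i - v kk := by
    intro i hi
    have hi' : i < kk := by
      rw [Fin.lt_def]; exact (hmemtopk i).1 hi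
    have h2 := hsort i kk hi'
    rw [hg]; simp only []
    exact max_eq_left (by linarith)
  have hgout : ∀ i : Fin n, i ∉ topk → g i = 0 := by
    intro i hi
    have hik : k ≤ (i : ℕ) := le_of_not_gt (fun h => hi ((hmemtopk i).2 h))
    have hvi : v i ≤ v kk := by
      rcases eq_or_lt_of_le hik with h | h
      · have : i = kk := by
          have hkv : (kk : ℕ) = k := rfl
          ext; omega
        rw [this]
      · exact le_of_lt (hsort kk i (by rw [Fin.lt_def]; exact h))
    rw [hg]; simp only []
    exact max_eq_right (by linarith)
  have hsumg : ∑ i, g i = W - k * v kk := by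
    have h1 : ∑ i, g i = ∑ i ∈ topk, g i :=
      (Finset.sum_subset (Finset.subset_univ topk) (fun i _ hi => hgout i hi)).symm
    rw [h1, Finset.sum_congr rfl hgtop, Finset.sum_sub_distrib, Finset.sum_const, hcard,
      nsmul_eq_mul]
  -- main value bound
  have hval_le2 : ∀ (T X : Finset (Fin n)), X.card ≤ k → X ⊆ T →
      val v X ≤ k * v kk + ∑ i ∈ T, g i := by
    intro T X hXc hXT
    have h1 : val v X ≤ ∑ i ∈ X, (v kk + g i) :=
      Finset.sum_le_sum (fun i _ => hgi i)
    have h2 : ∑ i ∈ X, (v kk + g i) = X.card * v kk + ∑ i ∈ X, g i := by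
      rw [Finset.sum_add_distrib, Finset.sum_const, nsmul_eq_mul]
    have h3 : (X.card : ℝ) * v kk ≤ k * v kk := by
      have : (X.card : ℝ) ≤ k := by exact_mod_cast hXc
      exact mul_le_mul_of_nonneg_right this hvk0
    have h4 : ∑ i ∈ X, g i ≤ ∑ i ∈ T, g i :=
      Finset.sum_le_sum_of_subset_of_nonneg hXT (fun i _ _ => hg0 i)
    linarith
  have hval_le : ∀ X : Finset (Fin n), X.card ≤ k → val v X ≤ W := by
    intro X hX
    have := hval_le2 Finset.univ X hX (Finset.subset_univ X)
    rw [hsumg] at this; linarith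
  -- sSup facts
  have hbdd : ∀ T : Finset (Fin n),
      BddAbove {r | ∃ X ∈ F, X ⊆ T ∧ r = val v X} := by
    intro T
    refine ⟨W, ?_⟩
    rintro r ⟨X, hX, -, rfl⟩
    exact hval_le X ((hmemF X).1 hX)
  have hne : ∀ T : Finset (Fin n),
      (val v (∅ : Finset (Fin n))) ∈ {r | ∃ X ∈ F, X ⊆ T ∧ r = val v X} := by
    intro T
    exact ⟨∅, (hmemF ∅).2 (by simp), Finset.empty_subset T, rfl⟩
  have hle_maxW : ∀ (T X : Finset (Fin n)), X.card ≤ k → X ⊆ T →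
      val v X ≤ maxW F v T := by
    intro T X h1 h2
    exact le_csSup (hbdd T) ⟨X, (hmemF X).2 h1, h2, rfl⟩
  have hmaxW_le : ∀ (T : Finset (Fin n)) (c : ℝ),
      (∀ X : Finset (Fin n), X.card ≤ k → X ⊆ T → val v X ≤ c) → maxW F v T ≤ c := by
    intro T c h
    refine csSup_le ⟨_, hne T⟩ ?_
    rintro r ⟨X, hX, hXT, rfl⟩
    exact h X ((hmemF X).1 hX) hXT
  have herase_univ : (Finset.univ : Finset (Option (Fin n))).eraseNone = Finset.univ := by
    ext i; simp [Finset.mem_eraseNone]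
  have hwuniv : w F v Finset.univ = W := by
    rw [w, if_pos (Finset.mem_univ none), herase_univ]
    exact le_antisymm (hmaxW_le _ _ (fun X h _ => hval_le X h))
      (hle_maxW _ topk (le_of_eq hcard) (Finset.subset_univ _))
  have hsumS : ∀ (u : Option (Fin n) → ℝ) (S : Finset (Option (Fin n))), none ∈ S →
      ∑ i ∈ S, u i = u none + ∑ i ∈ S.eraseNone, u (some i) := by
    intro u S hS
    have h1 : S.eraseNone.insertNone = S := by
      rw [Finset.insertNone_eraseNone, Finset.insert_eq_self.2 hS]
    conv_lhs => rw [← h1]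
    rw [Finset.sum_insertNone]
  -- the explicit core point
  set uu : Option (Fin n) → ℝ := fun o => Option.elim o ((k : ℝ) * v kk) g with huu
  have huun : uu none = (k : ℝ) * v kk := rfl
  have hucore : uu ∈ Core F v := by
    refine ⟨?_, ?_, ?_⟩
    · intro i
      cases i with
      | none => exact mul_nonneg (Nat.cast_nonneg k) hvk0
      | some i => exact hg0 i
    · rw [hsumS uu Finset.univ (Finset.mem_univ none), herase_univ, hwuniv]
      have : ∑ i : Fin n, uu (some i) = ∑ i, g i := rfl
      rw [this, hsumg, huun]; ring
    · intro S
      rw [w]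
      split_ifs with hS
      · rw [hsumS uu S hS]
        refine hmaxW_le _ _ ?_
        intro X hX hXT
        have := hval_le2 S.eraseNone X hX hXT
        rw [huun]
        have h2 : ∑ i ∈ S.eraseNone, uu (some i) = ∑ i ∈ S.eraseNone, g i := rfl
        rw [h2]; exact this
      · refine Finset.sum_nonneg (fun i _ => ?_)
        cases i with
        | none => exact mul_nonneg (Nat.cast_nonneg k) hvk0
        | some i => exact hg0 i
  -- lower bound for any core point
  have hlower : ∀ u ∈ Core F v, (k : ℝ) * v kk ≤ u none := by
    rintro u ⟨hpos, heff, hcons⟩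
    have hsumall : ∑ i : Fin n, u (some i) = W - u none := by
      have h2 := hsumS u Finset.univ (Finset.mem_univ none)
      rw [herase_univ] at h2
      rw [hwuniv] at heff
      linarith [h2 ▸ heff]
    have hub1 : ∀ j : Fin n, u (some j) ≤ g j := by
      intro j
      set S : Finset (Option (Fin n)) := (Finset.univ.erase j).insertNone with hS
      have hnS : none ∈ S := by simp [hS]
      have hcs := hcons S
      rw [w, if_pos hnS, hS, Finset.eraseNone_insertNone] at hcs
      have hsum2 : ∑ i ∈ S, u i = u none + ((W - u none) - u (some j)) := by
        rw [hsumS u S hnS, hS, Finset.eraseNone_insertNone,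
          Finset.sum_erase_eq_sub (Finset.mem_univ j), hsumall]
      rw [hsum2] at hcs
      by_cases hj : (j : ℕ) < k
      · have hjtop : j ∈ topk := (hmemtopk j).2 hj
        have hjkk : j ≠ kk := by
          intro h; rw [h] at hj; simp [hkk] at hj
        have hkknot : kk ∉ topk.erase j := by
          intro h
          have := (hmemtopk kk).1 (Finset.mem_of_mem_erase h)
          simp [hkk] at this
        have hXcard : (insert kk (topk.erase j)).card = k := by
          rw [Finset.card_insert_of_notMem hkknot, Finset.card_erase_of_mem hjtop, hcard]
          omega
        have hXsub : insert kk (topk.erase j) ⊆ Finset.univ.erase j := by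
          intro x hx
          rcases Finset.mem_insert.1 hx with rfl | hx
          · exact Finset.mem_erase.2 ⟨fun h => hjkk h.symm, Finset.mem_univ _⟩
          · exact Finset.mem_erase.2 ⟨(Finset.mem_erase.1 hx).1, Finset.mem_univ _⟩
        have hXval : val v (insert kk (topk.erase j)) = v kk + (W - v j) := by
          rw [val, Finset.sum_insert hkknot, Finset.sum_erase_eq_sub hjtop]
        have hle := hle_maxW _ _ (le_of_eq hXcard) hXsub
        rw [hXval] at hle
        rw [hgtop j hjtop]
        linarith
      · have hXsub : topk ⊆ Finset.univ.erase j := by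
          intro x hx
          refine Finset.mem_erase.2 ⟨?_, Finset.mem_univ _⟩
          intro h
          exact hj (h ▸ (hmemtopk x).1 hx)
        have hle := hle_maxW _ _ (le_of_eq hcard) hXsub
        have hWv : val v topk = W := rfl
        rw [hWv] at hle
        have : u (some j) ≤ 0 := by linarith
        exact le_trans this (hg0 j)
    have hsum3 : ∑ i : Fin n, u (some i) ≤ ∑ i, g i :=
      Finset.sum_le_sum (fun i _ => hub1 i)
    rw [hsumall, hsumg] at hsum3
    linarith
  -- conclude
  refine le_antisymm ?_ ?_
  · refine csInf_le ⟨(k : ℝ) * v kk, ?_⟩ ⟨uu, hucore, huun.symm⟩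
    rintro r ⟨u, hu, rfl⟩
    exact hlower u hu
  · refine le_csInf ⟨uu none, uu, hucore, rfl⟩ ?_
    rintro r ⟨u, hu, rfl⟩
    exact hlower u hu
end
end

section
/- If (X*, p) is a core outcome where X* maximizes v over F, then the payment of every allocated agent is at least her VCG payment: p_i ≥ v(X*_{−i}) − v(X*) + v_i for every i ∈ X*. Consequently, the core revenue benchmark is at least the VCG revenue: CoreRev(F,v) ≥ VcgRev(F,v). -/
open Classical

noncomputable section

open CoreComp

/-- Part 1: every core payment dominates the VCG payment. -/
lemma vcg_le_payment {n : ℕ} (F : Set (Finset (Fin n))) (v : Fin n → ℝ)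
    (Xs : Finset (Fin n))
    (Xm : Fin n → Finset (Fin n))
    (hXm : ∀ i ∈ Xs, Xm i ∈ F ∧ i ∉ Xm i ∧ ∀ X ∈ F, i ∉ X → val v X ≤ val v (Xm i))
    (p : Fin n → ℝ) (hp : ∀ i, p i ≤ v i)
    (hcore : ∀ S ∈ F, val v (S \ Xs) ≤ ∑ i ∈ Xs \ S, p i) :
    ∀ i ∈ Xs, val v (Xm i) - val v Xs + v i ≤ p i := by
  intro i hi
  obtain ⟨hmF, hinot, -⟩ := hXm i hi
  have h1 : val v (Xm i \ Xs) ≤ ∑ j ∈ Xs \ Xm i, p j := hcore _ hmF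
  have hsplit : val v (Xm i ∩ Xs) + val v (Xm i \ Xs) = val v (Xm i) :=
    Finset.sum_inter_add_sum_sdiff _ _ _
  have hiin : i ∈ Xs \ Xm i := Finset.mem_sdiff.mpr ⟨hi, hinot⟩
  have hsum : ∑ j ∈ (Xs \ Xm i).erase i, p j + p i = ∑ j ∈ Xs \ Xm i, p j :=
    Finset.sum_erase_add _ _ hiin
  have hple : ∑ j ∈ (Xs \ Xm i).erase i, p j ≤ ∑ j ∈ (Xs \ Xm i).erase i, v j :=
    Finset.sum_le_sum fun j _ => hp j
  have hset1 : Xm i ∩ Xs = Xs.erase i ∩ Xm i := by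
    ext x
    simp only [Finset.mem_inter, Finset.mem_erase]
    constructor
    · rintro ⟨h1, h2⟩; exact ⟨⟨fun h => hinot (h ▸ h1), h2⟩, h1⟩
    · rintro ⟨⟨-, h2⟩, h1⟩; exact ⟨h1, h2⟩
  have hset2 : (Xs \ Xm i).erase i = Xs.erase i \ Xm i := by
    ext x; simp only [Finset.mem_erase, Finset.mem_sdiff]; tauto
  have hsplit2 : val v (Xs.erase i ∩ Xm i) + val v (Xs.erase i \ Xm i) = val v (Xs.erase i) :=
    Finset.sum_inter_add_sum_sdiff _ _ _
  have hXse : val v (Xs.erase i) + v i = val v Xs :=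
    Finset.sum_erase_add _ _ hi
  have e1 : val v (Xm i ∩ Xs) = val v (Xs.erase i ∩ Xm i) := by rw [hset1]
  have e2 : (∑ j ∈ (Xs \ Xm i).erase i, v j) = val v (Xs.erase i \ Xm i) := by
    rw [hset2]; rfl
  linarith

/-- If `(Xs, p)` is a core outcome where `Xs` maximizes welfare over `F`
(and `Xm i` maximizes welfare over feasible sets excluding `i`), then every allocated agent
pays at least her VCG payment: `p i ≥ val v (Xm i) − val v Xs + v i` for `i ∈ Xs`.
Consequently `CoreRev(F,v) ≥ VcgRev(F,v) = ∑_{i ∈ Xs} (val v (Xm i) − val v Xs + v i)`. -/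
theorem core_rev_ge_vcg {n : ℕ} (F : Set (Finset (Fin n))) (v : Fin n → ℝ)
    (hF : ∅ ∈ F) (hv : ∀ i, 0 ≤ v i)
    (Xs : Finset (Fin n)) (hXs : Xs ∈ F) (hmax : ∀ X ∈ F, val v X ≤ val v Xs)
    (Xm : Fin n → Finset (Fin n))
    (hXm : ∀ i ∈ Xs, Xm i ∈ F ∧ i ∉ Xm i ∧ ∀ X ∈ F, i ∉ X → val v X ≤ val v (Xm i)) :
    (∀ p : Fin n → ℝ, (∀ i, p i ≤ v i) →
      (∀ S ∈ F, val v (S \ Xs) ≤ ∑ i ∈ Xs \ S, p i) →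
      ∀ i ∈ Xs, val v (Xm i) - val v Xs + v i ≤ p i) ∧
    (∑ i ∈ Xs, (val v (Xm i) - val v Xs + v i)) ≤ CoreRev F v := by
  have hbdd : ∀ T : Finset (Fin n), BddAbove {r | ∃ X ∈ F, X ⊆ T ∧ r = val v X} :=
    fun T => ⟨val v Xs, by rintro r ⟨X, hX, -, rfl⟩; exact hmax X hX⟩
  have hne : ∀ T : Finset (Fin n), (0:ℝ) ∈ {r | ∃ X ∈ F, X ⊆ T ∧ r = val v X} :=
    fun T => ⟨∅, hF, Finset.empty_subset T, by simp [val]⟩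
  have hmaxW_le : ∀ T, maxW F v T ≤ val v Xs :=
    fun T => csSup_le ⟨0, hne T⟩ (by rintro r ⟨X, hX, -, rfl⟩; exact hmax X hX)
  have hle_maxW : ∀ T, ∀ X ∈ F, X ⊆ T → val v X ≤ maxW F v T :=
    fun T X hX hXT => le_csSup (hbdd T) ⟨X, hX, hXT, rfl⟩
  have hvXs : (0:ℝ) ≤ val v Xs := Finset.sum_nonneg fun i _ => hv i
  have hw_univ : w F v Finset.univ = val v Xs := by
    rw [w, if_pos (Finset.mem_univ _)]
    refine le_antisymm (hmaxW_le _) (hle_maxW _ Xs hXs ?_)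
    intro a _
    exact Finset.mem_eraseNone.mpr (Finset.mem_univ _)
  -- Part 1
  have part1 : ∀ p : Fin n → ℝ, (∀ i, p i ≤ v i) →
      (∀ S ∈ F, val v (S \ Xs) ≤ ∑ i ∈ Xs \ S, p i) →
      ∀ i ∈ Xs, val v (Xm i) - val v Xs + v i ≤ p i :=
    fun p hp hcore => vcg_le_payment F v Xs Xm hXm p hp hcore
  refine ⟨part1, ?_⟩
  -- The trivial core imputation giving everything to the auctioneer
  set u0 : Option (Fin n) → ℝ := fun o => Option.elim o (val v Xs) (fun _ => 0) with hu0
  have hu0core : u0 ∈ Core F v := by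
    refine ⟨fun i => ?_, ?_, fun S => ?_⟩
    · cases i <;> simp [hu0, hvXs]
    · rw [hw_univ, Fintype.sum_option]; simp [hu0]
    · by_cases hnS : none ∈ S
      · rw [w, if_pos hnS]
        have hsum : ∑ i ∈ S, u0 i = val v Xs := by
          refine Finset.sum_eq_single_of_mem none hnS (fun b _ hb => ?_)
          cases b with
          | none => exact absurd rfl hb
          | some a => simp [hu0]
        rw [hsum]; exact hmaxW_le _
      · rw [w, if_neg hnS]
        refine Finset.sum_nonneg fun o _ => ?_
        cases o <;> simp [hu0, hvXs]
  -- Bound for an arbitrary core imputation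
  have key : ∀ u ∈ Core F v,
      (∑ i ∈ Xs, (val v (Xm i) - val v Xs + v i)) ≤ u none := by
    intro u hu
    obtain ⟨hnn, htot, hco⟩ := hu
    have htot' : u none + ∑ i, u (some i) = val v Xs := by
      rw [← Fintype.sum_option u, htot, hw_univ]
    -- coalition of auctioneer with Xs
    have hXsle : val v Xs ≤ u none + ∑ i ∈ Xs, u (some i) := by
      have he : (insert none (Xs.image some)).eraseNone = Xs := by
        ext a; simp [Finset.mem_eraseNone]
      have h := hco (insert none (Xs.image some))
      rw [w, if_pos (Finset.mem_insert_self _ _), he] at h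
      have hni : (none : Option (Fin n)) ∉ Xs.image some := by simp
      rw [Finset.sum_insert hni,
        Finset.sum_image (fun x _ y _ h => Option.some_inj.mp h)] at h
      exact le_trans (hle_maxW Xs Xs hXs subset_rfl) h
    have hsplitc : ∑ i ∈ Xs, u (some i) + ∑ i ∈ Xsᶜ, u (some i) = ∑ i, u (some i) :=
      Finset.sum_add_sum_compl Xs _
    have hc0 : ∑ i ∈ Xsᶜ, u (some i) = 0 := by
      have hle : ∑ i ∈ Xsᶜ, u (some i) ≤ 0 := by linarith
      exact le_antisymm hle (Finset.sum_nonneg fun i _ => hnn _)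
    have hzero : ∀ i, i ∉ Xs → u (some i) = 0 := by
      intro i hi
      exact (Finset.sum_eq_zero_iff_of_nonneg (fun j _ => hnn _)).mp hc0 i
        (Finset.mem_compl.mpr hi)
    have huniv : ∑ i ∈ Xs, u (some i) = ∑ i, u (some i) :=
      Finset.sum_subset (Finset.subset_univ Xs) (fun x _ hx => hzero x hx)
    set p : Fin n → ℝ := fun i => v i - u (some i) with hpdef
    have hp : ∀ i, p i ≤ v i := fun i => by
      simp only [hpdef]; linarith [hnn (some i)]
    have hcore_p : ∀ S ∈ F, val v (S \ Xs) ≤ ∑ i ∈ Xs \ S, p i := by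
      intro S hS
      have hsub : S ⊆ (Xs \ S)ᶜ := by
        intro x hx
        simp only [Finset.mem_compl, Finset.mem_sdiff, not_and, not_not]
        exact fun _ => hx
      have he : (insert none (((Xs \ S)ᶜ).image some)).eraseNone = (Xs \ S)ᶜ := by
        ext a; simp [Finset.mem_eraseNone]
      have h := hco (insert none (((Xs \ S)ᶜ).image some))
      rw [w, if_pos (Finset.mem_insert_self _ _), he] at h
      have hni : (none : Option (Fin n)) ∉ ((Xs \ S)ᶜ).image some := by simp
      rw [Finset.sum_insert hni,
        Finset.sum_image (fun x _ y _ h => Option.some_inj.mp h)] at h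
      have hvS : val v S ≤ u none + ∑ i ∈ (Xs \ S)ᶜ, u (some i) :=
        le_trans (hle_maxW _ S hS hsub) h
      have hsub2 : Xs ∩ S ⊆ (Xs \ S)ᶜ := by
        intro x hx
        simp only [Finset.mem_inter] at hx
        simp only [Finset.mem_compl, Finset.mem_sdiff, not_and, not_not]
        exact fun _ => hx.2
      have hTsum : ∑ i ∈ Xs ∩ S, u (some i) = ∑ i ∈ (Xs \ S)ᶜ, u (some i) := by
        refine Finset.sum_subset hsub2 (fun x hx hnx => ?_)
        simp only [Finset.mem_compl, Finset.mem_sdiff, not_and, not_not] at hx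
        simp only [Finset.mem_inter, not_and] at hnx
        by_cases hxXs : x ∈ Xs
        · exact absurd (hx hxXs) (hnx hxXs)
        · exact hzero x hxXs
      have hsplS : val v (S ∩ Xs) + val v (S \ Xs) = val v S :=
        Finset.sum_inter_add_sum_sdiff _ _ _
      have hsplX : val v (Xs ∩ S) + val v (Xs \ S) = val v Xs :=
        Finset.sum_inter_add_sum_sdiff _ _ _
      have hsplU : ∑ i ∈ Xs ∩ S, u (some i) + ∑ i ∈ Xs \ S, u (some i)
          = ∑ i ∈ Xs, u (some i) := Finset.sum_inter_add_sum_sdiff _ _ _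
      have hcomm : val v (S ∩ Xs) = val v (Xs ∩ S) := by rw [Finset.inter_comm]
      have hpsum : ∑ i ∈ Xs \ S, p i
          = val v (Xs \ S) - ∑ i ∈ Xs \ S, u (some i) := by
        simp only [hpdef, val]
        rw [Finset.sum_sub_distrib]
      rw [hpsum]
      linarith
    have hvcg := part1 p hp hcore_p
    have hsum_le : ∑ i ∈ Xs, (val v (Xm i) - val v Xs + v i) ≤ ∑ i ∈ Xs, p i :=
      Finset.sum_le_sum fun i hi => hvcg i hi
    have hpfin : ∑ i ∈ Xs, p i = u none := by
      simp only [hpdef]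
      rw [Finset.sum_sub_distrib]
      have : (∑ i ∈ Xs, v i) = val v Xs := rfl
      linarith [huniv, htot']
    linarith
  refine le_csInf ⟨u0 none, u0, hu0core, rfl⟩ ?_
  rintro r ⟨u, hu, rfl⟩
  exact key u hu
end
end

section
/- If F is the family of independent sets of a matroid on N, then the VCG outcome (allocate to a maximum-value basis X*, charge each i ∈ X* her VCG payment v(X*_{−i}) − v(X*) + v_i) is a core outcome, and the core revenue benchmark equals the VCG revenue: CoreRev(F,v) = VcgRev(F,v). -/
open Classical

noncomputable section

open CoreComp

set_option linter.unusedSectionVars false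
set_option linter.unusedVariables false
set_option maxHeartbeats 800000

namespace VcgAux

variable {α : Type*} [DecidableEq α]

/-- Rank function of the family `F`. -/
def rk (F : Set (Finset α)) (A : Finset α) : ℕ :=
  Finset.sup (A.powerset.filter (· ∈ F)) Finset.card

theorem card_le_rk {F : Set (Finset α)} {X A : Finset α} (hX : X ∈ F) (hXA : X ⊆ A) :
    X.card ≤ rk F A :=
  Finset.le_sup (f := Finset.card)
    (by simp only [Finset.mem_filter, Finset.mem_powerset]; exact ⟨hXA, hX⟩)

theorem exists_basis {F : Set (Finset α)} (hF : ∅ ∈ F) (A : Finset α) :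
    ∃ B, B ∈ F ∧ B ⊆ A ∧ B.card = rk F A := by
  obtain ⟨B, hB, hcard⟩ :=
    Finset.exists_mem_eq_sup (A.powerset.filter (· ∈ F))
      ⟨∅, by simp only [Finset.mem_filter, Finset.mem_powerset]; exact ⟨Finset.empty_subset A, hF⟩⟩
      Finset.card
  rw [Finset.mem_filter, Finset.mem_powerset] at hB
  exact ⟨B, hB.2, hB.1, hcard.symm⟩

theorem rk_le_card {F : Set (Finset α)} (A : Finset α) : rk F A ≤ A.card :=
  Finset.sup_le fun B hB =>
    Finset.card_le_card (Finset.mem_powerset.mp (Finset.mem_filter.mp hB).1)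

theorem rk_mono {F : Set (Finset α)} {A B : Finset α} (h : A ⊆ B) : rk F A ≤ rk F B :=
  Finset.sup_mono (Finset.filter_subset_filter _ (Finset.powerset_mono.mpr h))

theorem rk_indep {F : Set (Finset α)} {X : Finset α} (hX : X ∈ F) : rk F X = X.card :=
  le_antisymm (rk_le_card X) (card_le_rk hX Finset.Subset.rfl)

theorem rk_insert_le {F : Set (Finset α)} (hF : ∅ ∈ F)
    (hdc : ∀ X ∈ F, ∀ Y ⊆ X, Y ∈ F) (x : α) (A : Finset α) :
    rk F (insert x A) ≤ rk F A + 1 := by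
  obtain ⟨B, hB, hBsub, hBcard⟩ := exists_basis hF (insert x A)
  have h1 : B.erase x ∈ F := hdc B hB _ (Finset.erase_subset _ _)
  have h2 : B.erase x ⊆ A := by
    intro b hb
    rcases Finset.mem_erase.mp hb with ⟨hne, hbB⟩
    rcases Finset.mem_insert.mp (hBsub hbB) with h | h
    · exact absurd h hne
    · exact h
  have h3 : (B.erase x).card ≤ rk F A := card_le_rk h1 h2
  have h4 : B.card ≤ (B.erase x).card + 1 := by
    by_cases hx : x ∈ B
    · rw [Finset.card_erase_of_mem hx]; omega
    · rw [Finset.erase_eq_of_notMem hx]; omega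
  omega

theorem insert_mem_of_rk {F : Set (Finset α)} (hF : ∅ ∈ F)
    (hexch : ∀ X ∈ F, ∀ Y ∈ F, X.card < Y.card → ∃ e ∈ Y \ X, insert e X ∈ F)
    {A : Finset α} {x : α} (hA : A ∈ F) (hx : x ∉ A)
    (hr : rk F (insert x A) = A.card + 1) : insert x A ∈ F := by
  obtain ⟨C, hC, hCsub, hCcard⟩ := exists_basis hF (insert x A)
  rw [hr] at hCcard
  obtain ⟨e, he, hins⟩ := hexch A hA C hC (by omega)
  rcases Finset.mem_sdiff.mp he with ⟨heC, heA⟩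
  rcases Finset.mem_insert.mp (hCsub heC) with h | h
  · rwa [h] at hins
  · exact absurd h heA

theorem exists_basis_superset {F : Set (Finset α)} (hF : ∅ ∈ F)
    (hexch : ∀ X ∈ F, ∀ Y ∈ F, X.card < Y.card → ∃ e ∈ Y \ X, insert e X ∈ F)
    {A : Finset α} :
    ∀ d (X : Finset α), X ∈ F → X ⊆ A → X.card + d = rk F A →
      ∃ B, B ∈ F ∧ X ⊆ B ∧ B ⊆ A ∧ B.card = rk F A := by
  intro d
  induction d with
  | zero => intro X hX hXA hc; exact ⟨X, hX, Finset.Subset.rfl, hXA, by omega⟩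
  | succ d IH =>
    intro X hX hXA hc
    obtain ⟨B0, hB0, hB0sub, hB0card⟩ := exists_basis hF A
    obtain ⟨e, he, hins⟩ := hexch X hX B0 hB0 (by omega)
    have heA : e ∈ A := hB0sub (Finset.mem_sdiff.mp he).1
    have hnotX : e ∉ X := (Finset.mem_sdiff.mp he).2
    obtain ⟨B, hB, hsub, hsubA, hcard⟩ := IH (insert e X) hins
      (Finset.insert_subset heA hXA)
      (by rw [Finset.card_insert_of_notMem hnotX]; omega)
    exact ⟨B, hB, (Finset.subset_insert _ _).trans hsub, hsubA, hcard⟩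

theorem rk_union_eq {F : Set (Finset α)} (hF : ∅ ∈ F)
    (hexch : ∀ X ∈ F, ∀ Y ∈ F, X.card < Y.card → ∃ e ∈ Y \ X, insert e X ∈ F)
    {A T : Finset α} (hT : ∀ e ∈ T, rk F (insert e A) = rk F A) :
    rk F (A ∪ T) = rk F A := by
  refine le_antisymm ?_ (rk_mono Finset.subset_union_left)
  by_contra hlt
  push_neg at hlt
  obtain ⟨B, hB, hBsub, hBcard⟩ := exists_basis hF A
  obtain ⟨C, hC, hCsub, hCcard⟩ := exists_basis hF (A ∪ T)
  obtain ⟨e, he, hins⟩ := hexch B hB C hC (by omega)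
  rcases Finset.mem_sdiff.mp he with ⟨heC, heB⟩
  have hcard' : (insert e B).card = rk F A + 1 := by
    rw [Finset.card_insert_of_notMem heB, hBcard]
  rcases Finset.mem_union.mp (hCsub heC) with h | h
  · have : (insert e B).card ≤ rk F A := card_le_rk hins (Finset.insert_subset h hBsub)
    omega
  · have : (insert e B).card ≤ rk F (insert e A) :=
      card_le_rk hins (Finset.insert_subset_insert _ hBsub)
    rw [hT e h] at this
    omega

theorem rk_insert_mono_span {F : Set (Finset α)} (hF : ∅ ∈ F)
    (hdc : ∀ X ∈ F, ∀ Y ⊆ X, Y ∈ F)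
    (hexch : ∀ X ∈ F, ∀ Y ∈ F, X.card < Y.card → ∃ e ∈ Y \ X, insert e X ∈ F)
    {B C : Finset α} {i : α} (hBC : B ⊆ C) (hB : rk F (insert i B) = rk F B) :
    rk F (insert i C) = rk F C := by
  by_cases hiC : i ∈ C
  · rw [Finset.insert_eq_self.mpr hiC]
  refine le_antisymm ?_ (rk_mono (Finset.subset_insert _ _))
  by_contra hlt
  push_neg at hlt
  have hiB : i ∉ B := fun h => hiC (hBC h)
  obtain ⟨Q, hQ, hQsub, hQcard⟩ := exists_basis hF B
  have hQsub' : Q ⊆ insert i C := (hQsub.trans hBC).trans (Finset.subset_insert _ _)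
  have hle : Q.card ≤ rk F (insert i C) := card_le_rk hQ hQsub'
  obtain ⟨Q', hQ', hQQ', hQ'sub, hQ'card⟩ :=
    exists_basis_superset hF hexch (rk F (insert i C) - Q.card) Q hQ hQsub' (by omega)
  have hiQ' : i ∈ Q' := by
    by_contra hiQ'
    have : Q' ⊆ C := fun b hb => by
      rcases Finset.mem_insert.mp (hQ'sub hb) with h | h
      · exact absurd (h ▸ hb) hiQ'
      · exact h
    have := card_le_rk hQ' this
    omega
  have hiQ : i ∉ Q := fun h => hiB (hQsub h)
  have hmem : insert i Q ∈ F := hdc Q' hQ' _ (Finset.insert_subset hiQ' hQQ')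
  have : (insert i Q).card ≤ rk F (insert i B) :=
    card_le_rk hmem (Finset.insert_subset_insert _ hQsub)
  rw [hB, ← hQcard, Finset.card_insert_of_notMem hiQ] at this
  omega


/-- Key simultaneous-exchange lemma: if `i ∈ X \ S` cannot be added to `S`, then some
`e ∈ S \ X` can be swapped for `i` in `S`, and `e` can replace `i` in `X`. -/
theorem key_exchange {F : Set (Finset α)} (hF : ∅ ∈ F)
    (hdc : ∀ X ∈ F, ∀ Y ⊆ X, Y ∈ F)
    (hexch : ∀ X ∈ F, ∀ Y ∈ F, X.card < Y.card → ∃ e ∈ Y \ X, insert e X ∈ F)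
    {S X : Finset α} {i : α} (hS : S ∈ F) (hX : X ∈ F) (hiX : i ∈ X) (hiS : i ∉ S)
    (hins : insert i S ∉ F) :
    ∃ e ∈ S, e ∉ X ∧ insert i (S.erase e) ∈ F ∧ insert e (X.erase i) ∈ F := by
  set E : Finset α := S.filter (fun e => insert i (S.erase e) ∈ F) with hEdef
  have hE_sub : E ⊆ S := Finset.filter_subset _ _
  have hiE : i ∉ E := fun h => hiS (hE_sub h)
  -- Step 1: `insert i E` is dependent (fundamental circuit).
  have hEi : insert i E ∉ F := by
    intro hmem
    have hrkSi : rk F (insert i S) = S.card := by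
      refine le_antisymm ?_ (card_le_rk hS (Finset.subset_insert _ _))
      by_contra h
      push_neg at h
      obtain ⟨C, hC, hCsub, hCcard⟩ := exists_basis hF (insert i S)
      have hcardle : (insert i S).card ≤ C.card := by
        rw [Finset.card_insert_of_notMem hiS]; omega
      have : C = insert i S := Finset.eq_of_subset_of_card_le hCsub hcardle
      exact hins (this ▸ hC)
    have hsubiE : insert i E ⊆ insert i S := Finset.insert_subset_insert _ hE_sub
    have hcardE : (insert i E).card ≤ rk F (insert i S) := card_le_rk hmem hsubiE
    obtain ⟨B, hB, hEB, hBsub, hBcard⟩ :=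
      exists_basis_superset hF hexch (rk F (insert i S) - (insert i E).card)
        (insert i E) hmem hsubiE (by omega)
    rw [hrkSi] at hBcard
    have hiB : i ∈ B := hEB (Finset.mem_insert_self _ _)
    -- find e0 ∈ S \ B
    have hSnotB : ¬ S ⊆ B := by
      intro hsub
      have : insert i S ⊆ B := Finset.insert_subset hiB hsub
      have := Finset.card_le_card this
      rw [Finset.card_insert_of_notMem hiS] at this
      omega
    obtain ⟨e0, he0S, he0B⟩ := Finset.not_subset.mp hSnotB
    have hBsub' : B ⊆ insert i (S.erase e0) := by
      intro b hb
      rcases Finset.mem_insert.mp (hBsub hb) with h | h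
      · exact h ▸ Finset.mem_insert_self _ _
      · refine Finset.mem_insert_of_mem (Finset.mem_erase.mpr ⟨?_, h⟩)
        rintro rfl; exact he0B hb
    have hcard2 : (insert i (S.erase e0)).card ≤ B.card := by
      have h1 : i ∉ S.erase e0 := fun h => hiS (Finset.mem_of_mem_erase h)
      rw [Finset.card_insert_of_notMem h1, Finset.card_erase_of_mem he0S, hBcard]
      have : 1 ≤ S.card := Finset.card_pos.mpr ⟨e0, he0S⟩
      omega
    have hBeq : B = insert i (S.erase e0) := Finset.eq_of_subset_of_card_le hBsub' hcard2
    have he0E : e0 ∈ E := by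
      rw [hEdef, Finset.mem_filter]
      exact ⟨he0S, hBeq ▸ hB⟩
    exact he0B (hEB (Finset.mem_insert_of_mem he0E))
  -- Step 2: suppose no good `e` exists; derive a contradiction via closure/rank.
  by_contra hcon
  push_neg at hcon
  set A : Finset α := X.erase i with hAdef
  have hA : A ∈ F := hdc X hX _ (Finset.erase_subset _ _)
  have hAcard : A.card = X.card - 1 := Finset.card_erase_of_mem hiX
  have hrkA : rk F A = A.card := rk_indep hA
  -- every e ∈ E is spanned by A
  have hspan : ∀ e ∈ E, rk F (insert e A) = rk F A := by
    intro e heE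
    rcases Finset.mem_filter.mp heE with ⟨heS, hswap⟩
    by_cases heX : e ∈ X
    · have : e ∈ A := Finset.mem_erase.mpr ⟨fun h => hiS (h ▸ heS), heX⟩
      rw [Finset.insert_eq_self.mpr this]
    · have hbad : insert e A ∉ F := hcon e heS heX hswap
      have heA : e ∉ A := fun h => heX (Finset.mem_of_mem_erase h)
      refine le_antisymm ?_ (rk_mono (Finset.subset_insert _ _))
      have h1 : rk F (insert e A) ≤ rk F A + 1 := rk_insert_le hF hdc e A
      by_contra h
      push_neg at h
      have : rk F (insert e A) = A.card + 1 := by omega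
      exact hbad (insert_mem_of_rk hF hexch hA heA this)
  have hrAE : rk F (A ∪ E) = rk F A := rk_union_eq hF hexch hspan
  -- i is spanned by E
  have hEindep : E ∈ F := hdc S hS E hE_sub
  have hrkE : rk F E = E.card := rk_indep hEindep
  have hiEspan : rk F (insert i E) = rk F E := by
    refine le_antisymm ?_ (rk_mono (Finset.subset_insert _ _))
    have h1 : rk F (insert i E) ≤ rk F E + 1 := rk_insert_le hF hdc i E
    by_contra h
    push_neg at h
    have : rk F (insert i E) = E.card + 1 := by omega
    exact hEi (insert_mem_of_rk hF hexch hEindep hiE this)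
  -- hence i is spanned by A ∪ E
  have hfin : rk F (insert i (A ∪ E)) = rk F (A ∪ E) :=
    rk_insert_mono_span hF hdc hexch Finset.subset_union_right hiEspan
  -- but X ⊆ insert i (A ∪ E), contradiction with |X| ≤ rk
  have hXsub : X ⊆ insert i (A ∪ E) := by
    intro x hx
    by_cases hxi : x = i
    · exact hxi ▸ Finset.mem_insert_self _ _
    · exact Finset.mem_insert_of_mem
        (Finset.mem_union_left _ (Finset.mem_erase.mpr ⟨hxi, hx⟩))
  have hle := card_le_rk hX hXsub
  rw [hfin, hrAE, hrkA, hAcard] at hle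
  have : 1 ≤ X.card := Finset.card_pos.mpr ⟨i, hiX⟩
  omega


end VcgAux

open CoreComp VcgAux

theorem val_insert {α : Type*} [DecidableEq α] (v : α → ℝ) {X : Finset α} {a : α}
    (h : a ∉ X) : val v (insert a X) = v a + val v X := Finset.sum_insert h

theorem val_erase_add {α : Type*} [DecidableEq α] (v : α → ℝ) {X : Finset α} {a : α}
    (h : a ∈ X) : v a + val v (X.erase a) = val v X := Finset.add_sum_erase X v h

theorem eraseNone_univ {α : Type*} [Fintype α] :
    (Finset.univ : Finset (Option α)).eraseNone = Finset.univ := by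
  ext a; simp [Finset.mem_eraseNone]

theorem eraseNone_erase_some {α : Type*} [Fintype α] [DecidableEq α] (i : α) :
    ((Finset.univ : Finset (Option α)).erase (some i)).eraseNone = Finset.univ.erase i := by
  ext a; simp [Finset.mem_eraseNone]

theorem sum_option_decomp {α : Type*} [DecidableEq α] (u : Option α → ℝ)
    (S : Finset (Option α)) (hS : none ∈ S) :
    ∑ x ∈ S, u x = u none + ∑ j ∈ S.eraseNone, u (some j) := by
  rw [← Finset.add_sum_erase S u hS]
  congr 1
  have h : S.erase none = S.eraseNone.map ⟨some, Option.some_injective α⟩ := by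
    ext x
    cases x with
    | none => simp
    | some a => simp [Finset.mem_eraseNone]
  rw [h, Finset.sum_map]
  rfl
theorem core_ineq {n : ℕ} (F : Set (Finset (Fin n))) (v : Fin n → ℝ)
    (hF : ∅ ∈ F)
    (hdc : ∀ X ∈ F, ∀ Y ⊆ X, Y ∈ F)
    (hexch : ∀ X ∈ F, ∀ Y ∈ F, X.card < Y.card → ∃ e ∈ Y \ X, insert e X ∈ F)
    (Xs : Finset (Fin n)) (hXs : Xs ∈ F) (hmax : ∀ X ∈ F, val v X ≤ val v Xs)
    (Xm : Fin n → Finset (Fin n))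
    (hXm : ∀ i ∈ Xs, Xm i ∈ F ∧ i ∉ Xm i ∧ ∀ X ∈ F, i ∉ X → val v X ≤ val v (Xm i)) :
    ∀ S ∈ F, val v (S \ Xs) ≤ ∑ i ∈ Xs \ S, (val v (Xm i) - val v Xs + v i) := by
  -- the marginal-value bound for i ∈ Xs
  have hmarg : ∀ i ∈ Xs, val v Xs - v i ≤ val v (Xm i) := by
    intro i hi
    have h1 : Xs.erase i ∈ F := hdc Xs hXs _ (Finset.erase_subset _ _)
    have h2 : i ∉ Xs.erase i := Finset.notMem_erase _ _
    have h3 := (hXm i hi).2.2 _ h1 h2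
    have h4 := val_erase_add v hi
    linarith
  have main : ∀ k, ∀ S ∈ F, (Xs \ S).card = k →
      val v S ≤ val v Xs + ∑ i ∈ Xs \ S, (val v (Xm i) - val v Xs) := by
    intro k
    induction k using Nat.strong_induction_on with
    | _ k IH =>
      intro S hS hcard
      rcases Finset.eq_empty_or_nonempty (Xs \ S) with hemp | ⟨i, hi⟩
      · rw [hemp, Finset.sum_empty]
        have := hmax S hS
        linarith
      · rcases Finset.mem_sdiff.mp hi with ⟨hiXs, hiS⟩
        have hsum : ∑ j ∈ Xs \ S, (val v (Xm j) - val v Xs) =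
            (val v (Xm i) - val v Xs) + ∑ j ∈ (Xs \ S).erase i, (val v (Xm j) - val v Xs) :=
          (Finset.add_sum_erase _ _ hi).symm
        by_cases hins : insert i S ∈ F
        · -- Case 1: i can simply be added
          have hdiff : Xs \ insert i S = (Xs \ S).erase i := by
            ext j
            simp only [Finset.mem_sdiff, Finset.mem_erase, Finset.mem_insert]
            tauto
          have hlt : ((Xs \ insert i S).card) < k := by
            rw [hdiff, Finset.card_erase_of_mem hi]
            have : 1 ≤ (Xs \ S).card := Finset.card_pos.mpr ⟨i, hi⟩
            omega
          have hIH := IH _ hlt _ hins rfl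
          rw [hdiff] at hIH
          have hval : val v (insert i S) = v i + val v S := val_insert v hiS
          have := hmarg i hiXs
          rw [hsum]
          linarith
        · -- Case 2: exchange needed
          obtain ⟨e, heS, heXs, hSswap, hXswap⟩ :=
            key_exchange hF hdc hexch hS hXs hiXs hiS hins
          have hie : i ≠ e := fun h => hiS (h ▸ heS)
          set S' : Finset (Fin n) := insert i (S.erase e) with hS'def
          have hiS' : i ∉ S.erase e := fun h => hiS (Finset.mem_of_mem_erase h)
          have hdiff : Xs \ S' = (Xs \ S).erase i := by
            ext j
            have hje : j ∈ Xs → j ≠ e := fun hj h => heXs (h ▸ hj)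
            simp only [hS'def, Finset.mem_sdiff, Finset.mem_erase, Finset.mem_insert]
            tauto
          have hlt : (Xs \ S').card < k := by
            rw [hdiff, Finset.card_erase_of_mem hi]
            have : 1 ≤ (Xs \ S).card := Finset.card_pos.mpr ⟨i, hi⟩
            omega
          have hIH := IH _ hlt _ hSswap rfl
          rw [hdiff] at hIH
          have hvalS' : val v S' = v i + (val v S - v e) := by
            rw [hS'def, val_insert v hiS']
            have := val_erase_add v heS
            linarith
          -- the substitute bound : v e - v i ≤ val v (Xm i) - val v Xs
          have hsub : val v Xs - v i + v e ≤ val v (Xm i) := by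
            have h1 : i ∉ insert e (Xs.erase i) := by
              simp only [Finset.mem_insert]
              push_neg
              exact ⟨hie, Finset.notMem_erase _ _⟩
            have h2 := (hXm i hiXs).2.2 _ hXswap h1
            have h3 : val v (insert e (Xs.erase i)) = v e + val v (Xs.erase i) :=
              val_insert v (fun h => heXs (Finset.mem_of_mem_erase h))
            have h4 := val_erase_add v hiXs
            linarith
          rw [hsum]
          linarith
  intro S hS
  have h := main _ S hS rfl
  have h1 : val v (S ∩ Xs) + val v (S \ Xs) = val v S := Finset.sum_inter_add_sum_sdiff S Xs v
  have h2 : val v (Xs ∩ S) + val v (Xs \ S) = val v Xs := Finset.sum_inter_add_sum_sdiff Xs S v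
  have h3 : val v (S ∩ Xs) = val v (Xs ∩ S) := by rw [Finset.inter_comm]
  have h4 : ∑ i ∈ Xs \ S, (val v (Xm i) - val v Xs + v i) =
      (∑ i ∈ Xs \ S, (val v (Xm i) - val v Xs)) + ∑ i ∈ Xs \ S, v i :=
    Finset.sum_add_distrib
  have h5 : val v (Xs \ S) = ∑ i ∈ Xs \ S, v i := rfl
  linarith

theorem coreRev_eq {n : ℕ} (F : Set (Finset (Fin n))) (v : Fin n → ℝ)
    (hF : ∅ ∈ F)
    (Xs : Finset (Fin n)) (hXs : Xs ∈ F) (hmax : ∀ X ∈ F, val v X ≤ val v Xs)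
    (Xm : Fin n → Finset (Fin n))
    (hXm : ∀ i ∈ Xs, Xm i ∈ F ∧ i ∉ Xm i ∧ ∀ X ∈ F, i ∉ X → val v X ≤ val v (Xm i))
    (p : Fin n → ℝ)
    (hp0 : ∀ i ∈ Xs, 0 ≤ p i)
    (hpv : ∀ i ∈ Xs, p i = val v (Xm i) - val v Xs + v i)
    (hcore : ∀ S ∈ F, val v (S \ Xs) ≤ ∑ i ∈ Xs \ S, p i) :
    CoreRev F v = ∑ i ∈ Xs, p i := by
  have hvp : ∀ i ∈ Xs, v i - p i = val v Xs - val v (Xm i) := fun i hi => by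
    rw [hpv i hi]; ring
  have hvp0 : ∀ i ∈ Xs, 0 ≤ v i - p i := fun i hi => by
    rw [hvp i hi]; have := hmax _ (hXm i hi).1; linarith
  have hW_univ : w F v (Finset.univ : Finset (Option (Fin n))) = val v Xs := by
    unfold w maxW
    rw [if_pos (Finset.mem_univ _), eraseNone_univ]
    refine IsGreatest.csSup_eq ⟨⟨Xs, hXs, Finset.subset_univ _, rfl⟩, ?_⟩
    rintro r ⟨X, hX, -, rfl⟩
    exact hmax X hX
  -- the candidate core imputation
  set u : Option (Fin n) → ℝ :=
    fun o => o.elim (∑ i ∈ Xs, p i) (fun i => if i ∈ Xs then v i - p i else 0) with hu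
  have hu_none : u none = ∑ i ∈ Xs, p i := rfl
  have hu_some : ∀ i, u (some i) = if i ∈ Xs then v i - p i else 0 := fun _ => rfl
  have hu0 : ∀ o, 0 ≤ u o := by
    intro o
    cases o with
    | none => exact Finset.sum_nonneg hp0
    | some i =>
      rw [hu_some]
      by_cases hi : i ∈ Xs
      · rw [if_pos hi]; exact hvp0 i hi
      · rw [if_neg hi]
  have hsum_some : ∑ i : Fin n, u (some i) = ∑ i ∈ Xs, (v i - p i) := by
    have : ∑ i : Fin n, u (some i) = ∑ i : Fin n, (if i ∈ Xs then v i - p i else 0) :=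
      Finset.sum_congr rfl (fun i _ => hu_some i)
    rw [this, Finset.sum_ite_mem, Finset.univ_inter]
  have hu_core : u ∈ Core F v := by
    refine ⟨hu0, ?_, ?_⟩
    · rw [Fintype.sum_option, hW_univ, hu_none, hsum_some, ← Finset.sum_add_distrib]
      exact Finset.sum_congr rfl (fun i _ => by ring)
    · intro S
      by_cases hnS : none ∈ S
      · unfold w
        rw [if_pos hnS, sum_option_decomp u S hnS]
        unfold maxW
        refine csSup_le ⟨val v ∅, ∅, hF, Finset.empty_subset _, rfl⟩ ?_
        rintro r ⟨X, hX, hXsub, rfl⟩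
        have hA := hcore X hX
        have e1 : val v (X ∩ Xs) + val v (X \ Xs) = val v X :=
          Finset.sum_inter_add_sum_sdiff X Xs v
        have e2 : ∑ i ∈ Xs ∩ X, p i + ∑ i ∈ Xs \ X, p i = ∑ i ∈ Xs, p i :=
          Finset.sum_inter_add_sum_sdiff Xs X p
        have e3 : ∑ j ∈ S.eraseNone, u (some j) = ∑ j ∈ S.eraseNone ∩ Xs, (v j - p j) := by
          have h := Finset.sum_congr rfl (fun j (_ : j ∈ S.eraseNone) => hu_some j)
          rw [h, Finset.sum_ite_mem]
        have e4 : ∑ j ∈ X ∩ Xs, (v j - p j) ≤ ∑ j ∈ S.eraseNone ∩ Xs, (v j - p j) :=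
          Finset.sum_le_sum_of_subset_of_nonneg
            (Finset.inter_subset_inter hXsub Finset.Subset.rfl)
            (fun j hj _ => hvp0 j (Finset.mem_inter.mp hj).2)
        have e5 : val v (X ∩ Xs) = ∑ j ∈ X ∩ Xs, v j := rfl
        have e6 : ∑ j ∈ X ∩ Xs, v j = ∑ j ∈ X ∩ Xs, p j + ∑ j ∈ X ∩ Xs, (v j - p j) := by
          rw [← Finset.sum_add_distrib]
          exact Finset.sum_congr rfl (fun i _ => by ring)
        have e7 : ∑ j ∈ X ∩ Xs, p j = ∑ j ∈ Xs ∩ X, p j := by rw [Finset.inter_comm]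
        rw [hu_none]
        linarith
      · unfold w
        rw [if_neg hnS]
        exact Finset.sum_nonneg (fun x _ => hu0 x)
  -- lower bound: every core imputation gives the auctioneer at least the VCG revenue
  have hlower : ∀ u' ∈ Core F v, ∑ i ∈ Xs, p i ≤ u' none := by
    rintro u' ⟨h0, hsum, hco⟩
    have hWu : ∑ i : Option (Fin n), u' i = val v Xs := by rw [hsum, hW_univ]
    have hbnd : ∀ i : Fin n, u' (some i) ≤ (if i ∈ Xs then v i - p i else 0) := by
      intro i
      have hco_i := hco (Finset.univ.erase (some i))
      have hnm : (none : Option (Fin n)) ∈ Finset.univ.erase (some i) :=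
        Finset.mem_erase.mpr ⟨by simp, Finset.mem_univ _⟩
      unfold w at hco_i
      rw [if_pos hnm, eraseNone_erase_some] at hco_i
      have hsum_er : ∑ x ∈ Finset.univ.erase (some i), u' x =
          (∑ x : Option (Fin n), u' x) - u' (some i) := by
        have := Finset.add_sum_erase Finset.univ u' (Finset.mem_univ (some i))
        linarith
      rw [hsum_er, hWu] at hco_i
      by_cases hi : i ∈ Xs
      · rw [if_pos hi]
        have hmw : maxW F v (Finset.univ.erase i) = val v (Xm i) := by
          unfold maxW
          refine IsGreatest.csSup_eq ⟨⟨Xm i, (hXm i hi).1, ?_, rfl⟩, ?_⟩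
          · intro j hj
            exact Finset.mem_erase.mpr ⟨fun h => (hXm i hi).2.1 (h ▸ hj), Finset.mem_univ _⟩
          · rintro r ⟨X, hX, hsubX, rfl⟩
            have hiX : i ∉ X := fun h =>
              absurd rfl (Finset.mem_erase.mp (hsubX h)).1
            exact (hXm i hi).2.2 X hX hiX
        rw [hmw] at hco_i
        have := hvp i hi
        linarith
      · rw [if_neg hi]
        have hmw : maxW F v (Finset.univ.erase i) = val v Xs := by
          unfold maxW
          refine IsGreatest.csSup_eq ⟨⟨Xs, hXs, ?_, rfl⟩, ?_⟩
          · intro j hj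
            exact Finset.mem_erase.mpr ⟨fun h => hi (h ▸ hj), Finset.mem_univ _⟩
          · rintro r ⟨X, hX, -, rfl⟩
            exact hmax X hX
        rw [hmw] at hco_i
        linarith
    have hdec : ∑ i : Option (Fin n), u' i = u' none + ∑ i : Fin n, u' (some i) :=
      Fintype.sum_option u'
    have hb : ∑ i : Fin n, u' (some i) ≤ ∑ i : Fin n, (if i ∈ Xs then v i - p i else 0) :=
      Finset.sum_le_sum (fun i _ => hbnd i)
    rw [Finset.sum_ite_mem, Finset.univ_inter] at hb
    have hd : ∑ i ∈ Xs, (v i - p i) = val v Xs - ∑ i ∈ Xs, p i := by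
      rw [Finset.sum_sub_distrib]; rfl
    linarith
  have hmem : (∑ i ∈ Xs, p i) ∈ {r | ∃ u' ∈ Core F v, r = u' none} :=
    ⟨u, hu_core, hu_none.symm⟩
  have hlb : ∀ r ∈ {r | ∃ u' ∈ Core F v, r = u' none}, ∑ i ∈ Xs, p i ≤ r := by
    rintro r ⟨u', hu', rfl⟩
    exact hlower u' hu'
  unfold CoreRev
  exact le_antisymm (csInf_le ⟨_, hlb⟩ hmem) (le_csInf ⟨_, hmem⟩ hlb)


/-- If `F` is the family of independent sets of a matroid on the agents
(nonempty, downward closed, with the exchange property), then the VCG outcome — allocate to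
a maximum-value basis `Xs` and charge each `i ∈ Xs` the VCG payment
`val v (Xm i) − val v Xs + v i` (losers pay `0`) — is a core outcome, and the core revenue
benchmark equals the VCG revenue. -/
theorem matroid_core_eq_vcg {n : ℕ} (F : Set (Finset (Fin n))) (v : Fin n → ℝ)
    (hF : ∅ ∈ F)
    (hdc : ∀ X ∈ F, ∀ Y ⊆ X, Y ∈ F)
    (hexch : ∀ X ∈ F, ∀ Y ∈ F, X.card < Y.card → ∃ e ∈ Y \ X, insert e X ∈ F)
    (hv : ∀ i, 0 ≤ v i)
    (Xs : Finset (Fin n)) (hXs : Xs ∈ F) (hmax : ∀ X ∈ F, val v X ≤ val v Xs)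
    (Xm : Fin n → Finset (Fin n))
    (hXm : ∀ i ∈ Xs, Xm i ∈ F ∧ i ∉ Xm i ∧ ∀ X ∈ F, i ∉ X → val v X ≤ val v (Xm i)) :
    (∀ i, (if i ∈ Xs then val v (Xm i) - val v Xs + v i else 0) ≤ v i) ∧
    (∀ S ∈ F, val v (S \ Xs) ≤ ∑ i ∈ Xs \ S, (val v (Xm i) - val v Xs + v i)) ∧
    CoreRev F v = ∑ i ∈ Xs, (val v (Xm i) - val v Xs + v i) := by
  have part1 : ∀ i, (if i ∈ Xs then val v (Xm i) - val v Xs + v i else 0) ≤ v i := by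
    intro i
    by_cases hi : i ∈ Xs
    · rw [if_pos hi]
      have := hmax _ (hXm i hi).1
      linarith
    · rw [if_neg hi]; exact hv i
  have part2 := core_ineq F v hF hdc hexch Xs hXs hmax Xm hXm
  refine ⟨part1, part2, ?_⟩
  refine coreRev_eq F v hF Xs hXs hmax Xm hXm
    (fun i => val v (Xm i) - val v Xs + v i) ?_ (fun i _ => rfl) part2
  intro i hi
  have h1 : Xs.erase i ∈ F := hdc Xs hXs _ (Finset.erase_subset _ _)
  have h3 := (hXm i hi).2.2 _ h1 (Finset.notMem_erase _ _)
  have h4 := val_erase_add v hi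
  linarith
end
end

section
/- For any environment F and any valuation profile v, the core revenue benchmark is dominated by the Micali–Valiant benchmark: MV(F,v) ≥ CoreRev(F,v). -/
open Classical

noncomputable section

open CoreComp

lemma maxW_le {α : Type*} [Fintype α] {F : Set (Finset α)} {v : α → ℝ} (T : Finset α)
    (hF : ∅ ∈ F) {B : ℝ} (h : ∀ X ∈ F, X ⊆ T → val v X ≤ B) : maxW F v T ≤ B := by
  refine csSup_le ⟨val v ∅, ⟨∅, hF, by simp, rfl⟩⟩ ?_
  rintro r ⟨X, hX, hXT, rfl⟩
  exact h X hX hXT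

/-- For any environment `F` and any nonnegative valuation profile `v`,
the core revenue benchmark is dominated by the Micali–Valiant benchmark
`MV(F,v) = max { val v X : X ∈ F, i* ∉ X }`, where `i*` is an agent of largest value. -/
theorem mv_dominates_core_rev {n : ℕ} (F : Set (Finset (Fin n))) (v : Fin n → ℝ)
    (hF : ∅ ∈ F) (hv : ∀ i, 0 ≤ v i)
    (istar : Fin n) (histar : ∀ j, v j ≤ v istar) :
    CoreRev F v ≤ sSup {r | ∃ X ∈ F, istar ∉ X ∧ r = val v X} := by
  classical
  set Mset : Set ℝ := {r | ∃ X ∈ F, istar ∉ X ∧ r = val v X} with hMset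
  have hMfin : Mset.Finite := by
    apply (Set.finite_range (val v)).subset
    rintro r ⟨X, _, _, rfl⟩; exact ⟨X, rfl⟩
  set M : ℝ := sSup Mset with hM
  have h0M : (0 : ℝ) ∈ Mset := ⟨∅, hF, by simp, by simp [val]⟩
  have hM0 : 0 ≤ M := le_csSup hMfin.bddAbove h0M
  have hWfin : {r | ∃ X ∈ F, X ⊆ (Finset.univ : Finset (Fin n)) ∧ r = val v X}.Finite := by
    apply (Set.finite_range (val v)).subset
    rintro r ⟨X, _, _, rfl⟩; exact ⟨X, rfl⟩
  set W : ℝ := maxW F v Finset.univ with hW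
  have hMW : M ≤ W := by
    apply csSup_le ⟨0, h0M⟩
    rintro r ⟨X, hX, _, rfl⟩
    exact le_csSup hWfin.bddAbove ⟨X, hX, Finset.subset_univ X, rfl⟩
  set u : Option (Fin n) → ℝ := fun o => match o with
    | none => M
    | some j => if j = istar then W - M else 0 with hu
  have hunn : ∀ i, 0 ≤ u i := by
    rintro (_ | j)
    · exact hM0
    · simp only [hu]
      split <;> linarith
  have huniv : (Finset.univ : Finset (Option (Fin n))).eraseNone = Finset.univ := by
    ext x; simp
  have hwu : w F v Finset.univ = W := by
    simp [w, huniv, hW]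
  have hsum : (∑ i, u i) = w F v Finset.univ := by
    rw [hwu, Fintype.sum_option]
    have : (∑ j : Fin n, u (some j)) = W - M := by
      simp only [hu]
      rw [Finset.sum_ite_eq' Finset.univ istar fun _ => W - M]
      simp
    rw [this]; simp [hu]
  have hcoal : ∀ S : Finset (Option (Fin n)), w F v S ≤ ∑ i ∈ S, u i := by
    intro S
    by_cases hnS : none ∈ S
    · rw [w, if_pos hnS]
      by_cases hiS : some istar ∈ S
      · have hpair : ({none, some istar} : Finset (Option (Fin n))) ⊆ S := by
          intro x hx; simp at hx; rcases hx with rfl | rfl <;> assumption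
        have hsub : maxW F v S.eraseNone ≤ W := by
          apply maxW_le _ hF
          intro X hX _
          exact le_csSup hWfin.bddAbove ⟨X, hX, Finset.subset_univ X, rfl⟩
        have hle : (∑ i ∈ ({none, some istar} : Finset (Option (Fin n))), u i)
            ≤ ∑ i ∈ S, u i :=
          Finset.sum_le_sum_of_subset_of_nonneg hpair (fun i _ _ => hunn i)
        have hps : (∑ i ∈ ({none, some istar} : Finset (Option (Fin n))), u i) = W := by
          rw [Finset.sum_pair (by simp)]
          simp [hu]
        linarith
      · have hsub : maxW F v S.eraseNone ≤ M := by
          apply maxW_le _ hF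
          intro X hX hXS
          have histX : istar ∉ X := by
            intro hin
            exact hiS (Finset.mem_eraseNone.mp (hXS hin))
          exact le_csSup hMfin.bddAbove ⟨X, hX, histX, rfl⟩
        have : u none ≤ ∑ i ∈ S, u i :=
          Finset.single_le_sum (fun i _ => hunn i) hnS
        simp only [hu] at this
        linarith
    · rw [w, if_neg hnS]
      exact Finset.sum_nonneg fun i _ => hunn i
  have hucore : u ∈ Core F v := ⟨hunn, hsum, hcoal⟩
  have hbdd : BddBelow {r | ∃ u ∈ Core F v, r = u none} := by
    refine ⟨0, ?_⟩
    rintro r ⟨u', hu', rfl⟩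
    exact hu'.1 none
  exact csInf_le hbdd ⟨u, hucore, rfl⟩
end
end

section
/- In the Text-and-Image setting: if ∑_{i=1}^k v^T_i ≥ v^I_1 (the highest-value feasible set consists of text ads) then CoreRev = max{k·v^T_{k+1}, v^I_1}; if ∑_{i=1}^k v^T_i < v^I_1 (the highest-value feasible set consists of an image ad) then CoreRev = max{v^I_2, ∑_{i=1}^k v^T_i}. -/
open Classical

noncomputable section

namespace CoreComp

/-- Text-and-Image feasibility with `k` slots, `nT` text ads and `nI` image ads:
a set of agents is feasible iff it consists of at most `k` text ads,
or of a single image ad. -/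
def TIFeasible (k nT nI : ℕ) : Set (Finset (Fin nT ⊕ Fin nI)) :=
  {X | (X.card ≤ k ∧ ∀ a ∈ X, ∃ i : Fin nT, a = Sum.inl i) ∨
       (∃ i : Fin nI, X = {Sum.inr i})}

end CoreComp

open CoreComp

set_option linter.unusedSectionVars false

namespace CoreAux
open CoreComp Finset

variable {α : Type*} [Fintype α] {F : Set (Finset α)} {v : α → ℝ}

lemma bddAbove_valset (T : Finset α) :
    BddAbove {r | ∃ X ∈ F, X ⊆ T ∧ r = val v X} :=
  Set.Finite.bddAbove <| (Set.finite_range (val v)).subset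
    (by rintro r ⟨X, _, _, rfl⟩; exact ⟨X, rfl⟩)

lemma le_maxW {X T : Finset α} (hX : X ∈ F) (hXT : X ⊆ T) : val v X ≤ maxW F v T :=
  le_csSup (bddAbove_valset T) ⟨X, hX, hXT, rfl⟩

lemma maxW_le {T : Finset α} {r : ℝ} (hr : 0 ≤ r)
    (h : ∀ X ∈ F, X ⊆ T → val v X ≤ r) : maxW F v T ≤ r :=
  Real.sSup_le (by rintro x ⟨X, hX, hXT, rfl⟩; exact h X hX hXT) hr

lemma sum_coalition (u : Option α → ℝ) (X : Finset α) :
    ∑ i ∈ insert none (X.image some), u i = u none + ∑ a ∈ X, u (some a) := by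
  rw [Finset.sum_insert (by simp), Finset.sum_image (by simp)]

lemma w_univ : w F v Finset.univ = maxW F v Finset.univ := by
  rw [w, if_pos (Finset.mem_univ _)]
  congr 1
  ext a; simp [Finset.mem_eraseNone]

lemma core_iff {u : Option α → ℝ} :
    u ∈ Core F v ↔ (∀ i, 0 ≤ u i) ∧ (∑ i, u i) = maxW F v Finset.univ ∧
      ∀ X ∈ F, val v X ≤ u none + ∑ a ∈ X, u (some a) := by
  constructor
  · rintro ⟨h0, hsum, hS⟩
    refine ⟨h0, by rwa [w_univ] at hsum, fun X hX => ?_⟩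
    have h := hS (insert none (X.image some))
    rw [w, if_pos (Finset.mem_insert_self _ _), sum_coalition] at h
    have he : (insert none (X.image some)).eraseNone = X := by
      ext a; simp [Finset.mem_eraseNone]
    rw [he] at h
    exact (le_maxW hX (subset_refl X)).trans h
  · rintro ⟨h0, hsum, hX⟩
    refine ⟨h0, by rwa [w_univ], fun S => ?_⟩
    rw [w]
    split_ifs with hn
    · refine maxW_le (Finset.sum_nonneg fun i _ => h0 i) (fun X hXF hXS => ?_)
      refine (hX X hXF).trans ?_
      rw [← sum_coalition]
      refine Finset.sum_le_sum_of_subset_of_nonneg ?_ (fun i _ _ => h0 i)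
      intro i hi
      rcases Finset.mem_insert.mp hi with rfl | hi
      · exact hn
      · obtain ⟨a, ha, rfl⟩ := Finset.mem_image.mp hi
        exact Finset.mem_eraseNone.mp (hXS ha)
    · exact Finset.sum_nonneg fun i _ => h0 i

lemma coreRev_eq {r : ℝ} (hmem : ∃ u ∈ Core F v, u none = r)
    (hlb : ∀ u ∈ Core F v, r ≤ u none) : CoreRev F v = r := by
  obtain ⟨u, hu, hur⟩ := hmem
  refine le_antisymm (csInf_le ⟨r, ?_⟩ ⟨u, hu, hur.symm⟩) (le_csInf ⟨u none, u, hu, rfl⟩ ?_)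
  · rintro x ⟨u', hu', rfl⟩; exact hlb u' hu'
  · rintro x ⟨u', hu', rfl⟩; exact hlb u' hu'

lemma opt_facts {u : Option α → ℝ} (hu : u ∈ Core F v) {Opt : Finset α}
    (hOpt : Opt ∈ F) (hval : val v Opt = maxW F v Finset.univ) :
    (∀ a ∉ Opt, u (some a) = 0) ∧
      ∑ a ∈ Opt, u (some a) = maxW F v Finset.univ - u none := by
  obtain ⟨h0, hsum, hc⟩ := core_iff.mp hu
  have htot : ∑ a : α, u (some a) = maxW F v Finset.univ - u none := by
    have := Fintype.sum_option u
    rw [hsum] at this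
    linarith [this]
  have hsplit : ∑ a ∈ Finset.univ \ Opt, u (some a) + ∑ a ∈ Opt, u (some a)
      = ∑ a : α, u (some a) := Finset.sum_sdiff (Finset.subset_univ Opt)
  have hOptle := hc Opt hOpt
  rw [hval] at hOptle
  have hzero : ∑ a ∈ Finset.univ \ Opt, u (some a) = 0 := by
    have h1 : ∑ a ∈ Finset.univ \ Opt, u (some a) ≤ 0 := by linarith
    have h2 : 0 ≤ ∑ a ∈ Finset.univ \ Opt, u (some a) :=
      Finset.sum_nonneg fun a _ => h0 _
    linarith
  constructor
  · intro a ha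
    have := (Finset.sum_eq_zero_iff_of_nonneg (fun a _ => h0 (some a))).mp hzero a
      (Finset.mem_sdiff.mpr ⟨Finset.mem_univ a, ha⟩)
    exact this
  · linarith

lemma sum_le_top (g : ℕ → ℝ) (hg : ∀ i j, i ≤ j → g j ≤ g i) (hg0 : ∀ i, 0 ≤ g i) :
    ∀ k (t : Finset ℕ), t.card ≤ k → ∑ j ∈ t, g j ≤ ∑ j ∈ Finset.range k, g j := by
  intro k
  induction k with
  | zero => intro t ht
            rw [Nat.le_zero, Finset.card_eq_zero] at ht
            simp [ht]
  | succ k ih =>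
    intro t ht
    by_cases hsub : t ⊆ Finset.range (k + 1)
    · exact Finset.sum_le_sum_of_subset_of_nonneg hsub fun i _ _ => hg0 i
    · have hne : t.Nonempty := by
        rcases Finset.eq_empty_or_nonempty t with rfl | h
        · exact absurd (Finset.empty_subset _) hsub
        · exact h
      set M := t.max' hne with hM
      have hMt : M ∈ t := t.max'_mem hne
      by_cases hMk : M ≤ k
      · exact absurd (fun x hx => Finset.mem_range.mpr
          (Nat.lt_succ_of_le (le_trans (t.le_max' x hx) hMk))) hsub
      · have : ∑ j ∈ t.erase M, g j + g M = ∑ j ∈ t, g j :=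
          Finset.sum_erase_add t g hMt
        have hcard : (t.erase M).card ≤ k := by
          have := Finset.card_erase_of_mem hMt
          omega
        have h1 := ih (t.erase M) hcard
        have h2 : g M ≤ g k := hg k M (by omega)
        rw [Finset.sum_range_succ]
        linarith


section TI
variable {k nT nI : ℕ}

lemma text_rep {X : Finset (Fin nT ⊕ Fin nI)} (h : ∀ a ∈ X, ∃ i : Fin nT, a = Sum.inl i) :
    X = X.toLeft.image Sum.inl := by
  ext a
  simp only [Finset.mem_image, Finset.mem_toLeft]
  constructor
  · intro ha
    obtain ⟨i, rfl⟩ := h a ha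
    exact ⟨i, ha, rfl⟩
  · rintro ⟨i, hi, rfl⟩; exact hi

lemma text_sum {X : Finset (Fin nT ⊕ Fin nI)} (h : ∀ a ∈ X, ∃ i : Fin nT, a = Sum.inl i)
    (f : Fin nT ⊕ Fin nI → ℝ) : ∑ a ∈ X, f a = ∑ i ∈ X.toLeft, f (Sum.inl i) := by
  conv_lhs => rw [text_rep h]
  exact Finset.sum_image (fun a _ b _ hab => Sum.inl_injective hab)

lemma text_card {X : Finset (Fin nT ⊕ Fin nI)} (h : ∀ a ∈ X, ∃ i : Fin nT, a = Sum.inl i) :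
    X.toLeft.card = X.card := by
  conv_rhs => rw [text_rep h]
  exact (Finset.card_image_of_injective _ Sum.inl_injective).symm

variable (vT : Fin nT → ℝ)

/-- auxiliary extension of vT to ℕ -/
def gbar : ℕ → ℝ := fun i => if h : i < nT then vT ⟨i, h⟩ else 0

variable {vT}
variable (hsT : ∀ i j : Fin nT, i ≤ j → vT j ≤ vT i) (hnnT : ∀ i, 0 ≤ vT i)

include hsT hnnT in
lemma gbar_anti : ∀ i j, i ≤ j → gbar vT j ≤ gbar vT i := by
  intro i j hij
  unfold gbar
  split_ifs with hj hi hi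
  · exact hsT ⟨i, hi⟩ ⟨j, hj⟩ hij
  · omega
  · exact hnnT _
  · exact le_refl 0

lemma gbar_nonneg (hnnT : ∀ i, 0 ≤ vT i) : ∀ i, 0 ≤ gbar vT i := by
  intro i; unfold gbar; split_ifs
  · exact hnnT _
  · exact le_refl 0

lemma gbar_fin (i : Fin nT) : gbar vT (i : ℕ) = vT i := by
  unfold gbar; rw [dif_pos i.isLt]

include hsT hnnT in
lemma textsum_le (hk : k ≤ nT) (s : Finset (Fin nT)) (hcard : s.card ≤ k) :
    ∑ i ∈ s, vT i ≤ ∑ i : Fin k, vT (Fin.castLE hk i) := by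
  have h1 : ∑ i ∈ s, vT i = ∑ j ∈ s.image Fin.val, gbar vT j := by
    rw [Finset.sum_image (fun a _ b _ hab => Fin.val_injective hab)]
    exact (Finset.sum_congr rfl fun i _ => gbar_fin i).symm
  have h2 : ∑ i : Fin k, vT (Fin.castLE hk i) = ∑ j ∈ Finset.range k, gbar vT j := by
    rw [← Fin.sum_univ_eq_sum_range (fun j => gbar vT j) k]
    refine Finset.sum_congr rfl fun i _ => ?_
    have : Fin.castLE hk i = ⟨(i : ℕ), lt_of_lt_of_le i.isLt hk⟩ := rfl
    rw [this]
    exact (gbar_fin ⟨(i : ℕ), lt_of_lt_of_le i.isLt hk⟩).symm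
  rw [h1, h2]
  refine sum_le_top (gbar vT) (gbar_anti hsT hnnT) (gbar_nonneg hnnT) k _ ?_
  rw [Finset.card_image_of_injective _ Fin.val_injective]
  exact hcard


variable (hk : k ≤ nT)

/-- the optimal text set -/
def Topk (k nT nI : ℕ) (hk : k ≤ nT) : Finset (Fin nT ⊕ Fin nI) :=
  Finset.image (fun i : Fin k => (Sum.inl (Fin.castLE hk i) : Fin nT ⊕ Fin nI)) Finset.univ

lemma topk_inj : Function.Injective (fun i : Fin k => (Sum.inl (Fin.castLE hk i) : Fin nT ⊕ Fin nI)) :=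
  fun a b hab => Fin.castLE_injective hk (Sum.inl_injective hab)

lemma topk_card : (Topk k nT nI hk).card = k := by
  rw [Topk, Finset.card_image_of_injective _ (topk_inj hk), Finset.card_univ, Fintype.card_fin]

lemma topk_text : ∀ a ∈ Topk k nT nI hk, ∃ i : Fin nT, a = Sum.inl i := by
  intro a ha
  obtain ⟨i, _, rfl⟩ := Finset.mem_image.mp ha
  exact ⟨_, rfl⟩

lemma topk_mem : Topk k nT nI hk ∈ TIFeasible k nT nI :=
  Or.inl ⟨le_of_eq (topk_card hk), topk_text hk⟩

variable (vI : Fin nI → ℝ)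

lemma topk_sum (f : Fin nT ⊕ Fin nI → ℝ) :
    ∑ a ∈ Topk k nT nI hk, f a = ∑ i : Fin k, f (Sum.inl (Fin.castLE hk i)) :=
  Finset.sum_image (fun a _ b _ hab => topk_inj hk hab)

lemma topk_val : val (Sum.elim vT vI) (Topk k nT nI hk) = ∑ i : Fin k, vT (Fin.castLE hk i) := by
  rw [CoreComp.val, topk_sum]
  rfl

lemma img_mem (j : Fin nI) : ({Sum.inr j} : Finset (Fin nT ⊕ Fin nI)) ∈ TIFeasible k nT nI :=
  Or.inr ⟨j, rfl⟩

lemma img_val (j : Fin nI) : val (Sum.elim vT vI) ({Sum.inr j} : Finset (Fin nT ⊕ Fin nI)) = vI j := by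
  rw [CoreComp.val, Finset.sum_singleton]; rfl

variable (h2I : 2 ≤ nI) (hsI : ∀ i j : Fin nI, i ≤ j → vI j ≤ vI i) (hnnI : ∀ i, 0 ≤ vI i)

include hsT hnnT hsI hnnI h2I in
lemma feas_val_le {X : Finset (Fin nT ⊕ Fin nI)} (hX : X ∈ TIFeasible k nT nI) :
    val (Sum.elim vT vI) X ≤
      max (∑ i : Fin k, vT (Fin.castLE hk i)) (vI ⟨0, two_pos.trans_le h2I⟩) := by
  rcases hX with ⟨hcard, htext⟩ | ⟨j, rfl⟩
  · refine le_trans ?_ (le_max_left _ _)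
    rw [CoreComp.val, text_sum htext]
    have : ∀ i ∈ X.toLeft, Sum.elim vT vI (Sum.inl i) = vT i := fun i _ => rfl
    rw [Finset.sum_congr rfl this]
    refine textsum_le hsT hnnT hk _ ?_
    rw [text_card htext]; exact hcard
  · refine le_trans ?_ (le_max_right _ _)
    rw [img_val vI]
    exact hsI ⟨0, by omega⟩ j (by simp [Fin.le_def])

include hsT hnnT hsI hnnI h2I in
lemma maxW_univ :
    maxW (TIFeasible k nT nI) (Sum.elim vT vI) Finset.univ =
      max (∑ i : Fin k, vT (Fin.castLE hk i)) (vI ⟨0, two_pos.trans_le h2I⟩) := by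
  apply le_antisymm
  · refine maxW_le (le_trans (hnnI _) (le_max_right _ _))
      (fun X hX _ => feas_val_le hsT hnnT hk vI h2I hsI hnnI hX)
  · refine max_le ?_ ?_
    · rw [← topk_val hk vI]
      exact le_maxW (topk_mem hk) (Finset.subset_univ _)
    · rw [← img_val vI ⟨0, by omega⟩]
      exact le_maxW (img_mem _) (Finset.subset_univ _)

end TI
section Cases
variable {k nT nI : ℕ} {vT : Fin nT → ℝ} {vI : Fin nI → ℝ}

lemma case2 (hk : k ≤ nT) (h0I : 0 < nI) (h1I : 1 < nI)
    (hsT : ∀ i j : Fin nT, i ≤ j → vT j ≤ vT i)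
    (hsI : ∀ i j : Fin nI, i ≤ j → vI j ≤ vI i)
    (hnnT : ∀ i, 0 ≤ vT i) (hnnI : ∀ i, 0 ≤ vI i)
    (h2 : (∑ i : Fin k, vT (Fin.castLE hk i)) < vI ⟨0, h0I⟩) :
    CoreRev (TIFeasible k nT nI) (Sum.elim vT vI) =
      max (vI ⟨1, h1I⟩) (∑ i : Fin k, vT (Fin.castLE hk i)) := by
  have hnI : 2 ≤ nI := h1I
  set F := TIFeasible k nT nI with hF
  set v := Sum.elim vT vI with hv
  set Tk := ∑ i : Fin k, vT (Fin.castLE hk i) with hTkdef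
  set i0 : Fin nI := ⟨0, h0I⟩ with hi0
  set i1 : Fin nI := ⟨1, h1I⟩ with hi1def
  have hW : maxW F v Finset.univ = vI i0 := by
    rw [hF, hv, maxW_univ hsT hnnT hk vI hnI hsI hnnI]
    exact max_eq_right h2.le
  have hTk0 : 0 ≤ Tk := Finset.sum_nonneg fun i _ => hnnT _
  set r := max (vI i1) Tk with hr
  have hr0 : 0 ≤ r := le_trans (hnnI i1) (le_max_left _ _)
  have hrI0 : r ≤ vI i0 := max_le (hsI i0 i1 (by rw [Fin.le_def]; exact Nat.zero_le _)) h2.le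
  have hi10 : i1 ≠ i0 := by
    rw [hi1def, hi0]
    intro h
    exact absurd (congrArg Fin.val h) (by simp)
  apply coreRev_eq
  · refine ⟨fun o => o.elim r (Sum.elim (fun _ => 0)
      (fun j => if j = i0 then vI i0 - r else 0)), ?_, rfl⟩
    rw [core_iff]
    refine ⟨?_, ?_, ?_⟩
    · rintro (_ | (i | j))
      · exact hr0
      · exact le_refl 0
      · show 0 ≤ if j = i0 then vI i0 - r else 0
        split_ifs
        · linarith
        · exact le_refl 0
    · rw [Fintype.sum_option, hW]
      simp only [Option.elim_none, Option.elim_some]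
      have hs : ∑ a : Fin nT ⊕ Fin nI, (Sum.elim (fun _ => (0:ℝ))
          (fun j => if j = i0 then vI i0 - r else 0)) a = vI i0 - r := by
        rw [Fintype.sum_sum_type]
        simp only [Sum.elim_inl, Sum.elim_inr, Finset.sum_const_zero, zero_add]
        rw [Finset.sum_ite_eq' Finset.univ i0 (fun _ => vI i0 - r)]
        exact if_pos (Finset.mem_univ i0)
      rw [hs]
      ring
    · simp only [Option.elim_none, Option.elim_some]
      intro X hX
      rcases hX with ⟨hcard, htext⟩ | ⟨j, rfl⟩
      · have hval : val v X ≤ Tk := by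
          rw [hv, CoreComp.val, text_sum htext]
          exact textsum_le hsT hnnT hk _ (by rw [text_card htext]; exact hcard)
        have hsum0 : (0:ℝ) ≤ ∑ a ∈ X, (Sum.elim (fun _ => (0:ℝ))
            (fun j => if j = i0 then vI i0 - r else 0)) a := by
          refine Finset.sum_nonneg fun a _ => ?_
          rcases a with i | j
          · exact le_refl 0
          · show (0:ℝ) ≤ if j = i0 then vI i0 - r else 0
            split_ifs
            · linarith
            · exact le_refl 0
        have hrTk : Tk ≤ r := le_max_right _ _
        linarith
      · rw [hv, img_val vI j, Finset.sum_singleton]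
        simp only [Sum.elim_inr]
        by_cases hj : j = i0
        · subst hj
          rw [if_pos rfl]
          linarith
        · rw [if_neg hj]
          have hj1 : vI j ≤ vI i1 := by
            refine hsI i1 j ?_
            rw [Fin.le_def, hi1def]
            show 1 ≤ (j : ℕ)
            have : (j : ℕ) ≠ 0 := fun h => hj (by rw [hi0]; exact Fin.ext h)
            omega
          have := le_max_left (vI i1) Tk
          linarith
  · intro u hu
    obtain ⟨h0, hsum, hc⟩ := core_iff.mp hu
    have hOptval : val v ({Sum.inr i0} : Finset (Fin nT ⊕ Fin nI)) = maxW F v Finset.univ := by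
      rw [hv, img_val vI i0, hW]
    obtain ⟨hzero, hOptsum⟩ := opt_facts hu (img_mem i0) hOptval
    have hni1 : u (some (Sum.inr i1)) = 0 := by
      refine hzero _ ?_
      rw [Finset.mem_singleton]
      intro h
      exact hi10 (Sum.inr_injective h)
    have hb1 := hc _ (img_mem i1)
    rw [hv, img_val vI i1, Finset.sum_singleton, hni1] at hb1
    have hbT := hc _ (topk_mem hk)
    rw [hv, topk_val hk vI] at hbT
    have hTz : ∑ a ∈ Topk k nT nI hk, u (some a) = 0 := by
      refine Finset.sum_eq_zero fun a ha => ?_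
      obtain ⟨i, rfl⟩ := topk_text hk a ha
      refine hzero _ ?_
      rw [Finset.mem_singleton]
      exact fun h => Sum.inl_ne_inr h
    rw [hTz] at hbT
    exact max_le (by linarith) (by linarith)

lemma case1 (hk : k ≤ nT) (hkk : k < nT) (h0I : 0 < nI)
    (hsT : ∀ i j : Fin nT, i ≤ j → vT j ≤ vT i)
    (hsI : ∀ i j : Fin nI, i ≤ j → vI j ≤ vI i)
    (hnnT : ∀ i, 0 ≤ vT i) (hnnI : ∀ i, 0 ≤ vI i) (hnI : 2 ≤ nI)
    (h1 : vI ⟨0, h0I⟩ ≤ ∑ i : Fin k, vT (Fin.castLE hk i)) :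
    CoreRev (TIFeasible k nT nI) (Sum.elim vT vI) =
      max ((k : ℝ) * vT ⟨k, hkk⟩) (vI ⟨0, h0I⟩) := by
  set F := TIFeasible k nT nI with hF
  set v := Sum.elim vT vI with hv
  set Tk := ∑ i : Fin k, vT (Fin.castLE hk i) with hTkdef
  set vk := vT ⟨k, hkk⟩ with hvkdef
  set i0 : Fin nI := ⟨0, h0I⟩ with hi0
  have hW : maxW F v Finset.univ = Tk := by
    rw [hF, hv, maxW_univ hsT hnnT hk vI hnI hsI hnnI]
    exact max_eq_left h1
  have hcast_le : ∀ i : Fin k, vk ≤ vT (Fin.castLE hk i) := fun i =>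
    hsT _ _ (by rw [Fin.le_def]; exact le_of_lt i.isLt)
  have hvk0 : 0 ≤ vk := hnnT _
  have hkvk : (k : ℝ) * vk ≤ Tk := by
    have : ∑ _i : Fin k, vk = (k : ℝ) * vk := by
      rw [Finset.sum_const, Finset.card_univ, Fintype.card_fin, nsmul_eq_mul]
    rw [← this, hTkdef]
    exact Finset.sum_le_sum fun i _ => hcast_le i
  have hD : ∑ i : Fin k, (vT (Fin.castLE hk i) - vk) = Tk - (k : ℝ) * vk := by
    rw [Finset.sum_sub_distrib, Finset.sum_const, Finset.card_univ, Fintype.card_fin,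
      nsmul_eq_mul, hTkdef]
  set D := Tk - (k : ℝ) * vk with hDdef
  have hD0 : 0 ≤ D := by rw [hDdef]; linarith
  set r := max ((k : ℝ) * vk) (vI i0) with hr
  have hrTk : r ≤ Tk := max_le hkvk h1
  have hr0 : 0 ≤ r := le_trans (hnnI i0) (le_max_right _ _)
  set E := Tk - r with hE
  have hE0 : 0 ≤ E := by rw [hE]; linarith
  have hED : E ≤ D := by
    rw [hE, hDdef]
    have := le_max_left ((k : ℝ) * vk) (vI i0)
    linarith
  set lam := if D = 0 then (0 : ℝ) else E / D with hlam
  have hlam0 : 0 ≤ lam := by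
    rw [hlam]; split_ifs
    · exact le_refl 0
    · exact div_nonneg hE0 hD0
  have hlam1 : lam ≤ 1 := by
    rw [hlam]; split_ifs with h
    · linarith
    · rw [div_le_one (lt_of_le_of_ne hD0 (Ne.symm h))]; exact hED
  have hlamD : lam * D = E := by
    rw [hlam]; split_ifs with h
    · rw [h, mul_zero]
      rw [h] at hED
      linarith
    · exact div_mul_cancel₀ E h
  set c : Fin nT → ℝ := fun i => if (i : ℕ) < k then lam * (vT i - vk) else 0 with hcdef
  have hvklt : ∀ i : Fin nT, (i : ℕ) < k → vk ≤ vT i := fun i h =>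
    hsT i ⟨k, hkk⟩ (by rw [Fin.le_def]; exact le_of_lt h)
  have hc0 : ∀ i, 0 ≤ c i := by
    intro i
    rw [hcdef]
    dsimp only
    split_ifs with h
    · exact mul_nonneg hlam0 (by linarith [hvklt i h])
    · exact le_refl 0
  have hfilter : Finset.univ.filter (fun i : Fin nT => (i : ℕ) < k) =
      Finset.univ.image (fun i : Fin k => Fin.castLE hk i) := by
    ext j
    simp only [Finset.mem_filter, Finset.mem_univ, true_and, Finset.mem_image]
    constructor
    · intro hj; exact ⟨⟨(j : ℕ), hj⟩, rfl⟩
    · rintro ⟨i, _, rfl⟩; exact i.isLt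
  have hDfilter : ∑ i ∈ Finset.univ.filter (fun i : Fin nT => (i : ℕ) < k), (vT i - vk) = D := by
    rw [hfilter, Finset.sum_image (fun a _ b _ h => Fin.castLE_injective hk h), hD]
  have hsumc : ∑ i : Fin nT, c i = lam * D := by
    have h1' : ∑ i : Fin nT, c i =
        ∑ i ∈ Finset.univ.filter (fun i : Fin nT => (i : ℕ) < k), lam * (vT i - vk) := by
      rw [Finset.sum_filter]
    rw [h1', ← Finset.mul_sum, hDfilter]
  have hkey : ∀ s : Finset (Fin nT), s.card ≤ k → ∑ i ∈ s, vT i ≤ r + ∑ i ∈ s, c i := by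
    intro s hs
    set A := s.filter (fun i : Fin nT => (i : ℕ) < k) with hA
    set B := s.filter (fun i : Fin nT => ¬ (i : ℕ) < k) with hB
    have hAB : A.card + B.card = s.card := by
      rw [hA, hB]
      exact Finset.card_filter_add_card_filter_not (s := s)
        (p := fun i : Fin nT => (i : ℕ) < k)
    have hsplitV : ∑ i ∈ s, vT i = ∑ i ∈ A, vT i + ∑ i ∈ B, vT i :=
      (Finset.sum_filter_add_sum_filter_not s _ vT).symm
    have hsplitC : ∑ i ∈ s, c i = ∑ i ∈ A, c i + ∑ i ∈ B, c i :=
      (Finset.sum_filter_add_sum_filter_not s _ c).symm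
    have hBc : ∑ i ∈ B, c i = 0 := by
      refine Finset.sum_eq_zero fun i hi => ?_
      rw [hcdef]
      exact if_neg ((Finset.mem_filter.mp hi).2)
    have hAc : ∑ i ∈ A, c i = lam * ∑ i ∈ A, (vT i - vk) := by
      rw [Finset.mul_sum]
      refine Finset.sum_congr rfl fun i hi => ?_
      rw [hcdef]
      exact if_pos ((Finset.mem_filter.mp hi).2)
    set P := ∑ i ∈ A, (vT i - vk) with hP
    have hPD : P ≤ D := by
      rw [hP, ← hDfilter]
      refine Finset.sum_le_sum_of_subset_of_nonneg
        (Finset.filter_subset_filter _ (Finset.subset_univ s)) fun i hi _ => ?_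
      have := (Finset.mem_filter.mp hi).2
      linarith [hvklt i this]
    have hP0 : 0 ≤ P := by
      rw [hP]
      refine Finset.sum_nonneg fun i hi => ?_
      have := (Finset.mem_filter.mp hi).2
      linarith [hvklt i this]
    have hAv : ∑ i ∈ A, vT i = P + (A.card : ℝ) * vk := by
      rw [hP, Finset.sum_sub_distrib, Finset.sum_const, nsmul_eq_mul]
      ring
    have hBv : ∑ i ∈ B, vT i ≤ (B.card : ℝ) * vk := by
      have : ∑ i ∈ B, vT i ≤ ∑ _i ∈ B, vk := by
        refine Finset.sum_le_sum fun i hi => ?_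
        refine hsT ⟨k, hkk⟩ i ?_
        rw [Fin.le_def]
        show k ≤ (i : ℕ)
        have := (Finset.mem_filter.mp hi).2
        omega
      rwa [Finset.sum_const, nsmul_eq_mul] at this
    have hcards : (A.card : ℝ) + (B.card : ℝ) ≤ (k : ℝ) := by
      have h' : A.card + B.card ≤ k := by omega
      exact_mod_cast h'
    have hmul : (1 - lam) * P ≤ (1 - lam) * D :=
      mul_le_mul_of_nonneg_left hPD (by linarith)
    have hmul2 : ((A.card : ℝ) + (B.card : ℝ)) * vk ≤ (k : ℝ) * vk :=
      mul_le_mul_of_nonneg_right hcards hvk0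
    have e1 : (1 - lam) * P = P - lam * P := by ring
    have e2 : (1 - lam) * D = D - lam * D := by ring
    have e3 : ((A.card : ℝ) + (B.card : ℝ)) * vk = (A.card : ℝ) * vk + (B.card : ℝ) * vk := by
      ring
    rw [hsplitV, hsplitC, hBc, hAc, hAv]
    have hDval : D = Tk - (k : ℝ) * vk := hDdef
    have hEval : E = Tk - r := hE
    linarith [hmul, hlamD, hBv, hmul2]
  apply coreRev_eq
  · refine ⟨fun o => o.elim r (Sum.elim c (fun _ => 0)), ?_, rfl⟩
    rw [core_iff]
    refine ⟨?_, ?_, ?_⟩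
    · rintro (_ | (i | j))
      · exact hr0
      · exact hc0 i
      · exact le_refl 0
    · rw [Fintype.sum_option, hW]
      simp only [Option.elim_none, Option.elim_some]
      rw [Fintype.sum_sum_type]
      simp only [Sum.elim_inl, Sum.elim_inr, Finset.sum_const_zero, add_zero]
      rw [hsumc, hlamD, hE]
      ring
    · simp only [Option.elim_none, Option.elim_some]
      intro X hX
      rcases hX with ⟨hcard, htext⟩ | ⟨j, rfl⟩
      · rw [hv, CoreComp.val, text_sum htext, text_sum htext (fun a => Sum.elim c (fun _ => 0) a)]
        simp only [Sum.elim_inl]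
        refine hkey _ ?_
        rw [text_card htext]
        exact hcard
      · rw [hv, img_val vI j, Finset.sum_singleton]
        simp only [Sum.elim_inr]
        have hj : vI j ≤ vI i0 := hsI i0 j (by rw [Fin.le_def]; exact Nat.zero_le _)
        have := le_max_right ((k : ℝ) * vk) (vI i0)
        linarith
  · intro u hu
    obtain ⟨h0, hsum, hcon⟩ := core_iff.mp hu
    have hOptval : val v (Topk k nT nI hk) = maxW F v Finset.univ := by
      rw [hv, topk_val hk vI, hW, hTkdef]
    obtain ⟨hzero, hOptsum⟩ := opt_facts hu (topk_mem hk) hOptval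
    rw [hW] at hOptsum
    have hinr : (Sum.inr i0 : Fin nT ⊕ Fin nI) ∉ Topk k nT nI hk := by
      intro h
      obtain ⟨i, hi⟩ := topk_text hk _ h
      exact Sum.inr_ne_inl hi
    have ha := hcon _ (img_mem i0)
    rw [hv, img_val vI i0, Finset.sum_singleton, hzero _ hinr] at ha
    set b : Fin nT ⊕ Fin nI := Sum.inl ⟨k, hkk⟩ with hb
    have hbnot : b ∉ Topk k nT nI hk := by
      intro h
      obtain ⟨i, _, hi⟩ := Finset.mem_image.mp h
      have h' : Fin.castLE hk i = ⟨k, hkk⟩ := Sum.inl_injective hi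
      have h'' := congrArg Fin.val h'
      simp only [Fin.coe_castLE] at h''
      have := i.isLt
      omega
    have hub : u (some b) = 0 := hzero _ hbnot
    have hper : ∀ i : Fin k, u (some (Sum.inl (Fin.castLE hk i))) ≤ vT (Fin.castLE hk i) - vk := by
      intro i
      set a : Fin nT ⊕ Fin nI := Sum.inl (Fin.castLE hk i) with haa
      have hamem : a ∈ Topk k nT nI hk := Finset.mem_image.mpr ⟨i, Finset.mem_univ _, rfl⟩
      set Xi := insert b ((Topk k nT nI hk).erase a) with hXi
      have hbe : b ∉ (Topk k nT nI hk).erase a := fun h => hbnot (Finset.mem_of_mem_erase h)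
      have hkpos : 0 < k := i.pos
      have hXiF : Xi ∈ TIFeasible k nT nI := by
        left
        constructor
        · calc Xi.card ≤ ((Topk k nT nI hk).erase a).card + 1 := Finset.card_insert_le _ _
            _ = (k - 1) + 1 := by rw [Finset.card_erase_of_mem hamem, topk_card hk]
            _ ≤ k := by omega
        · intro x hx
          rcases Finset.mem_insert.mp hx with rfl | hx
          · exact ⟨⟨k, hkk⟩, rfl⟩
          · exact topk_text hk _ (Finset.mem_of_mem_erase hx)
      have hsumTk : ∑ x ∈ Topk k nT nI hk, v x = Tk := by
        rw [hTkdef, hv, ← topk_val hk vI, CoreComp.val]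
      have herase : ∑ x ∈ (Topk k nT nI hk).erase a, v x = Tk - v a := by
        have h' := Finset.sum_erase_add (Topk k nT nI hk) v hamem
        rw [hsumTk] at h'
        linarith
      have hvb : v b = vk := rfl
      have hva : v a = vT (Fin.castLE hk i) := rfl
      have hvalXi : val v Xi = vk + (Tk - vT (Fin.castLE hk i)) := by
        rw [hXi, CoreComp.val, Finset.sum_insert hbe, herase, hvb, hva]
      have hcX := hcon _ hXiF
      rw [hvalXi] at hcX
      have hsumXi : ∑ x ∈ Xi, u (some x) = (Tk - u none) - u (some a) := by
        rw [hXi, Finset.sum_insert hbe, hub]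
        have h' := Finset.sum_erase_add (Topk k nT nI hk) (fun x => u (some x)) hamem
        rw [hOptsum] at h'
        linarith
      rw [hsumXi] at hcX
      linarith
    have hsumper : ∑ i : Fin k, u (some (Sum.inl (Fin.castLE hk i))) = Tk - u none := by
      rw [← topk_sum hk (fun x => u (some x))]
      exact hOptsum
    have hfin : Tk - u none ≤ D := by
      rw [← hsumper, ← hD]
      exact Finset.sum_le_sum fun i _ => hper i
    exact max_le (by linarith [hDdef]) (by linarith)

end Cases

end CoreAux

open CoreAux

/-- Core revenue in the Text-and-Image setting (values sorted
nonincreasingly, zero-based indices, so `v^T_{k+1} = vT ⟨k,_⟩`, `v^I_1 = vI ⟨0,_⟩`,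
`v^I_2 = vI ⟨1,_⟩`): if `∑_{i=1}^k v^T_i ≥ v^I_1` then
`CoreRev = max {k·v^T_{k+1}, v^I_1}`; if `∑_{i=1}^k v^T_i < v^I_1` then
`CoreRev = max {v^I_2, ∑_{i=1}^k v^T_i}`. -/
theorem ti_core_rev {k nT nI : ℕ} (hnT : k + 1 ≤ nT) (hnI : 2 ≤ nI)
    (vT : Fin nT → ℝ) (vI : Fin nI → ℝ)
    (hsT : ∀ i j : Fin nT, i ≤ j → vT j ≤ vT i)
    (hsI : ∀ i j : Fin nI, i ≤ j → vI j ≤ vI i)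
    (hnnT : ∀ i, 0 ≤ vT i) (hnnI : ∀ i, 0 ≤ vI i) :
    (vI ⟨0, by omega⟩ ≤ ∑ i : Fin k, vT (Fin.castLE (by omega) i) →
      CoreRev (TIFeasible k nT nI) (Sum.elim vT vI) =
        max ((k : ℝ) * vT ⟨k, by omega⟩) (vI ⟨0, by omega⟩)) ∧
    ((∑ i : Fin k, vT (Fin.castLE (by omega) i)) < vI ⟨0, by omega⟩ →
      CoreRev (TIFeasible k nT nI) (Sum.elim vT vI) =
        max (vI ⟨1, by omega⟩) (∑ i : Fin k, vT (Fin.castLE (by omega) i))) := by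
  constructor
  · intro h
    exact CoreAux.case1 (by omega) (by omega) (by omega) hsT hsI hnnT hnnI hnI h
  · intro h
    exact CoreAux.case2 (by omega) (by omega) (by omega) hsT hsI hnnT hnnI h
end
end

section
/- For every truthful, individually rational randomized mechanism (x,p) for the environment with k text ads and one image ad, the expected revenue under the distribution D is at most 2: E_{v∼D}[∑_i p_i(v)] ≤ 2. -/
open Classical

noncomputable section

namespace CoreComp

/-- `H_k = ∑_{j=1}^k 1/j`. -/
def Hk (k : ℕ) : ℝ := ∑ j ∈ Finset.range k, (1 : ℝ) / (j + 1)

/-- `H = ⌈H_k⌉`. -/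
def Hceil (k : ℕ) : ℕ := ⌈Hk k⌉₊

/-- A text-value profile in the support of `D`: each text ad's value is some `1/j`,
`j ∈ {1, …, k}`; the profile encoded by `a` has `v^T_i = 1/(a i + 1)`.  Averaging over
all `a : Fin k → Fin k` is exactly averaging over i.i.d. uniform text values. -/
def tprof (k : ℕ) (a : Fin k → Fin k) : Fin k → ℝ := fun i => 1 / ((a i : ℕ) + 1)

/-- An image value in the support of `D`: `v^I = H/(c+1)`, `c + 1 ∈ {1, …, H}`. -/
def imval (k : ℕ) (c : Fin (Hceil k)) : ℝ := (Hceil k : ℝ) / ((c : ℕ) + 1)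

/-- Myerson payment of text ad `i` for allocation rule `xT`, at text profile `t` and
image value `b`. -/
def payT {k : ℕ} (xT : (Fin k → ℝ) → ℝ → Fin k → ℝ)
    (t : Fin k → ℝ) (b : ℝ) (i : Fin k) : ℝ :=
  t i * xT t b i - ∫ s in (0:ℝ)..(t i), xT (Function.update t i s) b i

/-- Myerson payment of the image ad for allocation rule `xI`. -/
def payI {k : ℕ} (xI : (Fin k → ℝ) → ℝ → ℝ) (t : Fin k → ℝ) (b : ℝ) : ℝ :=
  b * xI t b - ∫ s in (0:ℝ)..b, xI t s

end CoreComp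

open CoreComp


lemma integral_ge_const (g : ℝ → ℝ) (hg : Monotone g) {a b : ℝ} (hab : a ≤ b) :
    (b - a) * g a ≤ ∫ s in a..b, g s := by
  have h := intervalIntegral.integral_mono_on hab
    (intervalIntegrable_const (c := g a)) (hg.intervalIntegrable (μ := MeasureTheory.volume))
    (fun x hx => hg hx.1)
  simpa [smul_eq_mul, mul_comm] using h

lemma key_aux (V : ℝ) (hV : 0 < V) (g : ℝ → ℝ) (hg : Monotone g) :
    ∀ n : ℕ,
      ∑ c ∈ Finset.range (n + 1),
          (V / (c + 1) * g (V / (c + 1)) - ∫ s in (0:ℝ)..(V / (c + 1)), g s)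
        ≤ V / 1 * g (V / 1) - ((n : ℝ) + 1) * ∫ s in (0:ℝ)..(V / ((n : ℝ) + 1)), g s := by
  intro n
  induction n with
  | zero => simp
  | succ n ih =>
      rw [Finset.sum_range_succ]
      have hn2 : (0:ℝ) < (n:ℝ) + 2 := by positivity
      have hn1 : (0:ℝ) < (n:ℝ) + 1 := by positivity
      have hle : V / ((n:ℝ) + 2) ≤ V / ((n:ℝ) + 1) := by
        apply div_le_div_of_nonneg_left hV.le hn1 (by linarith)
      have hsplit : (∫ s in (0:ℝ)..(V / ((n:ℝ) + 1)), g s)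
          = (∫ s in (0:ℝ)..(V / ((n:ℝ) + 2)), g s)
            + ∫ s in (V / ((n:ℝ) + 2))..(V / ((n:ℝ) + 1)), g s :=
        (intervalIntegral.integral_add_adjacent_intervals
          (hg.intervalIntegrable (μ := MeasureTheory.volume)) (hg.intervalIntegrable (μ := MeasureTheory.volume))).symm
      have h2 := integral_ge_const g hg hle
      have harith : ((n:ℝ) + 1) * ((V / ((n:ℝ) + 1) - V / ((n:ℝ) + 2)) * g (V / ((n:ℝ) + 2)))
          = V / ((n:ℝ) + 2) * g (V / ((n:ℝ) + 2)) := by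
        field_simp
        ring
      have hkey : V / ((n:ℝ) + 2) * g (V / ((n:ℝ) + 2))
          ≤ ((n:ℝ) + 1) * ((∫ s in (0:ℝ)..(V / ((n:ℝ) + 1)), g s)
              - ∫ s in (0:ℝ)..(V / ((n:ℝ) + 2)), g s) := by
        rw [hsplit]
        have := mul_le_mul_of_nonneg_left h2 hn1.le
        calc V / ((n:ℝ) + 2) * g (V / ((n:ℝ) + 2))
            = ((n:ℝ) + 1) * ((V / ((n:ℝ) + 1) - V / ((n:ℝ) + 2)) * g (V / ((n:ℝ) + 2))) :=
              harith.symm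
          _ ≤ ((n:ℝ) + 1) * ∫ s in (V / ((n:ℝ) + 2))..(V / ((n:ℝ) + 1)), g s := this
          _ = ((n:ℝ) + 1) * ((∫ s in (0:ℝ)..(V / ((n:ℝ) + 2)), g s)
                + (∫ s in (V / ((n:ℝ) + 2))..(V / ((n:ℝ) + 1)), g s)
                - ∫ s in (0:ℝ)..(V / ((n:ℝ) + 2)), g s) := by ring_nf
      have hcast : ((n + 1 : ℕ) : ℝ) + 1 = (n:ℝ) + 2 := by push_cast; ring
      rw [hcast]
      linarith

lemma key (n : ℕ) (hn : 1 ≤ n) (V : ℝ) (hV : 0 < V) (g : ℝ → ℝ) (hg : Monotone g)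
    (hg0 : ∀ s, 0 ≤ g s) (hg1 : ∀ s, g s ≤ 1) :
    ∑ c ∈ Finset.range n,
        (V / (c + 1) * g (V / (c + 1)) - ∫ s in (0:ℝ)..(V / (c + 1)), g s) ≤ V := by
  obtain ⟨m, rfl⟩ : ∃ m, n = m + 1 := ⟨n - 1, (Nat.succ_pred_eq_of_pos hn).symm⟩
  have h := key_aux V hV g hg m
  have hI : (0:ℝ) ≤ ∫ s in (0:ℝ)..(V / ((m:ℝ) + 1)), g s :=
    intervalIntegral.integral_nonneg (by positivity) (fun u _ => hg0 u)
  have h1 : V / 1 * g (V / 1) ≤ V := by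
    have := hg1 (V / 1)
    nlinarith
  nlinarith [mul_nonneg (by positivity : (0:ℝ) ≤ (m:ℝ) + 1) hI]

lemma sum_update_eq (k : ℕ) (i : Fin k) (F : (Fin k → Fin k) → ℝ) :
    ∑ a : Fin k → Fin k, ∑ j : Fin k, F (Function.update a i j)
      = (k : ℝ) * ∑ a : Fin k → Fin k, F a := by
  classical
  let e := Equiv.piSplitAt i (fun _ : Fin k => Fin k)
  have h1 : ∀ (v j : Fin k) (r : {j' : Fin k // j' ≠ i} → Fin k),
      Function.update (e.symm (v, r)) i j = e.symm (j, r) := by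
    intro v j r
    funext x
    by_cases h : x = i
    · subst h; simp [e, Equiv.piSplitAt, Function.update_self]
    · simp [e, Equiv.piSplitAt, Function.update_of_ne h, h]
  rw [← Equiv.sum_comp e.symm (fun a => ∑ j, F (Function.update a i j)),
      ← Equiv.sum_comp e.symm F]
  rw [Fintype.sum_prod_type, Fintype.sum_prod_type]
  simp only [h1]
  rw [Finset.sum_const]
  simp only [Finset.card_univ, Fintype.card_fin, nsmul_eq_mul]
  congr 1
  exact Finset.sum_comm



/-- For every truthful, individually rational randomized mechanism
`(xT, xI)` for the environment with `k` text ads and one image ad (allocation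
probabilities in `[0,1]`, image and text never simultaneously allocated, allocation
monotone in each agent's own value, payments given by Myerson's formula), the expected
revenue under the distribution `D` is at most `2`. -/
theorem rand_expected_revenue_le_two (k : ℕ) (hk : 1 ≤ k)
    (xT : (Fin k → ℝ) → ℝ → Fin k → ℝ) (xI : (Fin k → ℝ) → ℝ → ℝ)
    (hT01 : ∀ t b i, xT t b i ∈ Set.Icc (0:ℝ) 1)
    (hI01 : ∀ t b, xI t b ∈ Set.Icc (0:ℝ) 1)
    (hfeas : ∀ t b i, xT t b i + xI t b ≤ 1)
    (hmonT : ∀ t b (i : Fin k) (v₁ v₂ : ℝ), v₁ ≤ v₂ →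
      xT (Function.update t i v₁) b i ≤ xT (Function.update t i v₂) b i)
    (hmonI : ∀ t (b₁ b₂ : ℝ), b₁ ≤ b₂ → xI t b₁ ≤ xI t b₂) :
    (∑ a : Fin k → Fin k, ∑ c : Fin (Hceil k),
        ((∑ i, payT xT (tprof k a) (imval k c) i) + payI xI (tprof k a) (imval k c))) /
      ((k : ℝ) ^ k * (Hceil k : ℝ)) ≤ 2 := by
  have hk0 : (0:ℝ) < k := by exact_mod_cast hk
  -- H ≥ 1
  have hHk : (0:ℝ) < Hk k := by
    have h0 : (0:ℕ) ∈ Finset.range k := Finset.mem_range.mpr hk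
    have := Finset.single_le_sum (f := fun j : ℕ => (1:ℝ)/(j+1))
      (fun j _ => by positivity) h0
    simp only [Nat.cast_zero, zero_add, div_one] at this
    unfold Hk; linarith
  have hH1 : 1 ≤ Hceil k := Nat.one_le_ceil_iff.mpr hHk
  have hH0 : (0:ℝ) < (Hceil k : ℝ) := by exact_mod_cast hH1
  set H := Hceil k with hHdef
  -- image part
  have himg : ∀ a : Fin k → Fin k,
      ∑ c : Fin H, payI xI (tprof k a) (imval k c) ≤ (H : ℝ) := by
    intro a
    set g : ℝ → ℝ := xI (tprof k a) with hg
    have hmg : Monotone g := fun b₁ b₂ h => hmonI _ _ _ h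
    have hkey := key H hH1 (H : ℝ) hH0 g hmg
      (fun s => (hI01 _ s).1) (fun s => (hI01 _ s).2)
    have heq : ∑ c : Fin H, payI xI (tprof k a) (imval k c)
        = ∑ c ∈ Finset.range H,
            ((H:ℝ) / (c + 1) * g ((H:ℝ) / (c + 1)) - ∫ s in (0:ℝ)..((H:ℝ) / (c + 1)), g s) := by
      rw [← Fin.sum_univ_eq_sum_range]
      rfl
    rw [heq]; exact hkey
  -- text part
  have htext : ∀ (b : ℝ) (i : Fin k),
      ∑ a : Fin k → Fin k, payT xT (tprof k a) b i ≤ (k:ℝ)^k / k := by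
    intro b i
    have hmain : (k:ℝ) * ∑ a : Fin k → Fin k, payT xT (tprof k a) b i ≤ (k:ℝ)^k := by
      rw [← sum_update_eq k i (fun a => payT xT (tprof k a) b i)]
      have hboundd : ∀ a : Fin k → Fin k,
          ∑ j : Fin k, payT xT (tprof k (Function.update a i j)) b i ≤ 1 := by
        intro a
        set g : ℝ → ℝ := fun s => xT (Function.update (tprof k a) i s) b i with hg
        have hmg : Monotone g := fun v₁ v₂ h => hmonT (tprof k a) b i v₁ v₂ h
        have hprof : ∀ j : Fin k, tprof k (Function.update a i j)
            = Function.update (tprof k a) i (1 / ((j:ℕ) + 1)) := by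
          intro j
          funext x
          by_cases h : x = i
          · subst h; simp [tprof, Function.update_self]
          · simp [tprof, Function.update_of_ne h]
        have hpay : ∀ j : Fin k, payT xT (tprof k (Function.update a i j)) b i
            = (1:ℝ) / ((j:ℕ) + 1) * g ((1:ℝ) / ((j:ℕ) + 1))
              - ∫ s in (0:ℝ)..((1:ℝ) / ((j:ℕ) + 1)), g s := by
          intro j
          rw [hprof j]
          simp only [payT, Function.update_self, Function.update_idem, hg]
        have hkey := key k hk 1 one_pos g hmg
          (fun s => (hT01 _ _ _).1) (fun s => (hT01 _ _ _).2)
        calc ∑ j : Fin k, payT xT (tprof k (Function.update a i j)) b i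
            = ∑ j ∈ Finset.range k,
                ((1:ℝ) / (j + 1) * g ((1:ℝ) / (j + 1)) - ∫ s in (0:ℝ)..((1:ℝ) / (j + 1)), g s) := by
              simp only [hpay]; rw [← Fin.sum_univ_eq_sum_range]
          _ ≤ 1 := hkey
      calc ∑ a : Fin k → Fin k, ∑ j : Fin k, payT xT (tprof k (Function.update a i j)) b i
          ≤ ∑ _a : Fin k → Fin k, (1:ℝ) := Finset.sum_le_sum (fun a _ => hboundd a)
        _ = (k:ℝ)^k := by
            simp [Finset.card_univ, Fintype.card_fun]
    rw [le_div_iff₀ hk0, mul_comm]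
    exact hmain
  -- combine
  rw [div_le_iff₀ (by positivity)]
  have hsplit : (∑ a : Fin k → Fin k, ∑ c : Fin H,
        ((∑ i, payT xT (tprof k a) (imval k c) i) + payI xI (tprof k a) (imval k c)))
      = (∑ c : Fin H, ∑ i : Fin k, ∑ a : Fin k → Fin k, payT xT (tprof k a) (imval k c) i)
        + ∑ a : Fin k → Fin k, ∑ c : Fin H, payI xI (tprof k a) (imval k c) := by
    rw [Finset.sum_comm]
    simp only [Finset.sum_add_distrib]
    congr 1
    · exact Finset.sum_congr rfl (fun c _ => Finset.sum_comm)
    · exact Finset.sum_comm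
  have h1 : (∑ c : Fin H, ∑ i : Fin k, ∑ a : Fin k → Fin k,
        payT xT (tprof k a) (imval k c) i) ≤ (k:ℝ)^k * (H:ℝ) := by
    calc (∑ c : Fin H, ∑ i : Fin k, ∑ a : Fin k → Fin k,
          payT xT (tprof k a) (imval k c) i)
        ≤ ∑ _c : Fin H, ∑ _i : Fin k, (k:ℝ)^k / k :=
          Finset.sum_le_sum (fun c _ => Finset.sum_le_sum (fun i _ => htext _ i))
      _ = (k:ℝ)^k * (H:ℝ) := by
          simp only [Finset.sum_const, Finset.card_univ, Fintype.card_fin, nsmul_eq_mul]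
          field_simp
  have h2 : (∑ a : Fin k → Fin k, ∑ c : Fin H, payI xI (tprof k a) (imval k c))
      ≤ (k:ℝ)^k * (H:ℝ) := by
    calc (∑ a : Fin k → Fin k, ∑ c : Fin H, payI xI (tprof k a) (imval k c))
        ≤ ∑ _a : Fin k → Fin k, (H:ℝ) := Finset.sum_le_sum (fun a _ => himg a)
      _ = (k:ℝ)^k * (H:ℝ) := by
          simp [Finset.card_univ, Fintype.card_fun]
  rw [hsplit]
  linarith
end
end

section
/- The expected core revenue benchmark under the distribution D is doubly logarithmic: there exist a constant c > 0 and k₀ such that for all k ≥ k₀, E_{v∼D}[min(∑_{i=1}^k v^T_i, v^I)] ≥ c·ln(ln k). (For each realized profile of D, the core revenue benchmark equals min(∑_{i=1}^k v^T_i, v^I).) -/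
open Classical

noncomputable section

namespace CoreComp

/-- Feasibility for `k` text ads and one image ad: any set of text ads, or the single
image ad. -/
def Feas1 (k : ℕ) : Set (Finset (Fin k ⊕ Unit)) :=
  {X | (∀ a ∈ X, ∃ i : Fin k, a = Sum.inl i) ∨ X = {Sum.inr ()}}

end CoreComp


namespace CoreComp

section Part2

variable {k : ℕ} {t : Fin k → ℝ} {I : ℝ}

/-- the set of all text ads -/
def Tset (k : ℕ) : Finset (Fin k ⊕ Unit) := Finset.univ.image Sum.inl

lemma mem_Feas1 (X : Finset (Fin k ⊕ Unit)) :
    X ∈ Feas1 k ↔ (∀ a ∈ X, ∃ i : Fin k, a = Sum.inl i) ∨ X = {Sum.inr ()} := Iff.rfl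

lemma Tset_mem : Tset k ∈ Feas1 k := by
  left; intro a ha
  rcases Finset.mem_image.1 ha with ⟨i, _, rfl⟩
  exact ⟨i, rfl⟩

lemma empty_mem : (∅ : Finset (Fin k ⊕ Unit)) ∈ Feas1 k := by
  left; intro a ha; simp at ha

lemma img_mem : ({Sum.inr ()} : Finset (Fin k ⊕ Unit)) ∈ Feas1 k := Or.inr rfl

variable (ht : ∀ i, 0 < t i) (hI : 0 < I)

lemma vnonneg (ht : ∀ i, 0 < t i) (hI : 0 < I) (a : Fin k ⊕ Unit) :
    0 ≤ Sum.elim t (fun _ => I) a := by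
  cases a with
  | inl i => exact (ht i).le
  | inr u => exact hI.le

lemma val_Tset : val (Sum.elim t fun _ => I) (Tset k) = ∑ i, t i := by
  rw [val, Tset, Finset.sum_image (by intro x _ y _ h; exact Sum.inl_injective h)]
  simp

lemma val_texts_le (ht : ∀ i, 0 < t i) (hI : 0 < I) (X : Finset (Fin k ⊕ Unit))
    (hX : ∀ a ∈ X, ∃ i : Fin k, a = Sum.inl i) :
    val (Sum.elim t fun _ => I) X ≤ ∑ i, t i := by
  rw [← val_Tset (t := t) (I := I)]
  apply Finset.sum_le_sum_of_subset_of_nonneg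
  · intro a ha
    rcases hX a ha with ⟨i, rfl⟩
    exact Finset.mem_image.2 ⟨i, Finset.mem_univ _, rfl⟩
  · intro a _ _; exact vnonneg ht hI a

lemma val_img : val (Sum.elim t fun _ => I) {Sum.inr ()} = I := by
  simp [val]

lemma maxW_le (ht : ∀ i, 0 < t i) (hI : 0 < I) (E : Finset (Fin k ⊕ Unit)) (r : ℝ)
    (h : ∀ X ∈ Feas1 k, X ⊆ E → val (Sum.elim t fun _ => I) X ≤ r) :
    maxW (Feas1 k) (Sum.elim t fun _ => I) E ≤ r := by
  apply csSup_le
  · exact ⟨0, ∅, empty_mem, Finset.empty_subset _, by simp [val]⟩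
  · rintro x ⟨X, hX, hXE, rfl⟩
    exact h X hX hXE

lemma le_maxW (ht : ∀ i, 0 < t i) (hI : 0 < I) (E : Finset (Fin k ⊕ Unit))
    (X : Finset (Fin k ⊕ Unit)) (hX : X ∈ Feas1 k) (hXE : X ⊆ E) :
    val (Sum.elim t fun _ => I) X ≤ maxW (Feas1 k) (Sum.elim t fun _ => I) E := by
  apply le_csSup
  · refine ⟨max (∑ i, t i) I, ?_⟩
    rintro x ⟨Y, hY, hYE, rfl⟩
    rcases hY with hY | rfl
    · exact le_max_of_le_left (val_texts_le ht hI Y hY)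
    · rw [val_img]; exact le_max_right _ _
  · exact ⟨X, hX, hXE, rfl⟩

lemma eraseNone_univ :
    (Finset.univ : Finset (Option (Fin k ⊕ Unit))).eraseNone = Finset.univ := by
  ext a; simp

lemma w_univ (ht : ∀ i, 0 < t i) (hI : 0 < I) :
    w (Feas1 k) (Sum.elim t fun _ => I) Finset.univ = max (∑ i, t i) I := by
  rw [w, if_pos (Finset.mem_univ _), eraseNone_univ]
  apply le_antisymm
  · apply maxW_le ht hI
    intro X hX _
    rcases hX with hX | rfl
    · exact le_max_of_le_left (val_texts_le ht hI X hX)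
    · rw [val_img]; exact le_max_right _ _
  · rcases le_total (∑ i, t i) I with h | h
    · rw [max_eq_right h]
      have := le_maxW ht hI Finset.univ _ img_mem (Finset.subset_univ _)
      rwa [val_img] at this
    · rw [max_eq_left h]
      have := le_maxW ht hI Finset.univ _ Tset_mem (Finset.subset_univ _)
      rwa [val_Tset] at this

lemma core_lb (ht : ∀ i, 0 < t i) (hI : 0 < I) (u : Option (Fin k ⊕ Unit) → ℝ)
    (hu : u ∈ Core (Feas1 k) (Sum.elim t fun _ => I)) :
    min (∑ i, t i) I ≤ u none := by
  obtain ⟨h1, h2, h3⟩ := hu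
  set v := Sum.elim t fun _ => I with hv
  set T := (∑ i, t i) with hT
  -- coalition S1 : all but image
  have hS1 := h3 (Finset.univ.erase (some (Sum.inr ())))
  have hwS1 : w (Feas1 k) v (Finset.univ.erase (some (Sum.inr ()))) = T := by
    rw [w, if_pos (by simp)]
    apply le_antisymm
    · apply maxW_le ht hI
      intro X hX hXE
      rcases hX with hX | rfl
      · exact val_texts_le ht hI X hX
      · exfalso
        have := hXE (Finset.mem_singleton_self _)
        rw [Finset.mem_eraseNone] at this
        simp at this
    · have hsub : Tset k ⊆ (Finset.univ.erase (some (Sum.inr ()))).eraseNone := by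
        intro a ha
        rcases Finset.mem_image.1 ha with ⟨i, _, rfl⟩
        rw [Finset.mem_eraseNone]
        simp
      have := le_maxW ht hI _ _ Tset_mem hsub
      rwa [val_Tset] at this
  have hsum1 : ∑ i ∈ Finset.univ.erase (some (Sum.inr ())), u i
      = (∑ i, u i) - u (some (Sum.inr ())) :=
    Finset.sum_erase_eq_sub (Finset.mem_univ _)
  -- coalition S2 : auctioneer and image
  have hS2 := h3 ({none, some (Sum.inr ())} : Finset (Option (Fin k ⊕ Unit)))
  have hwS2 : w (Feas1 k) v ({none, some (Sum.inr ())} : Finset (Option (Fin k ⊕ Unit))) = I := by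
    rw [w, if_pos (by simp)]
    have hE : ({none, some (Sum.inr ())} : Finset (Option (Fin k ⊕ Unit))).eraseNone
        = {Sum.inr ()} := by
      ext a; simp [Finset.mem_eraseNone]
    rw [hE]
    apply le_antisymm
    · apply maxW_le ht hI
      intro X hX hXE
      rcases hX with hX | rfl
      · have hXe : X = ∅ := by
          rw [Finset.eq_empty_iff_forall_notMem]
          intro a ha
          rcases hX a ha with ⟨i, rfl⟩
          have := Finset.mem_singleton.1 (hXE ha)
          simp at this
        rw [hXe]; simpa [val] using hI.le
      · rw [val_img]
    · have := le_maxW ht hI {Sum.inr ()} _ img_mem (Finset.Subset.refl _)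
      rwa [val_img] at this
  have hsum2 : ∑ i ∈ ({none, some (Sum.inr ())} : Finset (Option (Fin k ⊕ Unit))), u i
      = u none + u (some (Sum.inr ())) := Finset.sum_pair (by simp)
  rw [hwS1, hsum1, h2, w_univ ht hI] at hS1
  rw [hwS2, hsum2] at hS2
  rcases le_total T I with h | h
  · rw [min_eq_left h]
    rw [max_eq_right h] at hS1
    linarith
  · rw [min_eq_right h]
    rw [max_eq_left h] at hS1
    linarith


lemma core_witness (hk : 0 < k) (ht : ∀ i, 0 < t i) (hI : 0 < I) :
    ∃ u ∈ Core (Feas1 k) (Sum.elim t fun _ => I), u none = min (∑ i, t i) I := by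
  have : Nonempty (Fin k) := ⟨⟨0, hk⟩⟩
  set T := (∑ i, t i) with hTdef
  have hT : 0 < T := Finset.sum_pos (fun i _ => ht i) Finset.univ_nonempty
  rcases le_total I T with hIT | hTI
  · -- image value small: auctioneer gets I
    refine ⟨fun o => o.elim I (Sum.elim (fun i => t i * (1 - I / T)) (fun _ => 0)), ⟨?_, ?_, ?_⟩, ?_⟩
    · intro o
      match o with
      | none => exact hI.le
      | some (Sum.inl i) =>
        simp only [Option.elim, Sum.elim_inl]
        have : I / T ≤ 1 := (div_le_one hT).2 hIT
        exact mul_nonneg (ht i).le (by linarith)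
      | some (Sum.inr _) => simp
    · rw [w_univ ht hI, max_eq_left hIT, Fintype.sum_option]
      simp only [Option.elim]
      rw [Fintype.sum_sum_type]
      simp only [Sum.elim_inl, Sum.elim_inr]
      rw [← Finset.sum_mul]
      have : (∑ i, t i) * (1 - I / T) = T - I := by
        rw [← hTdef]; field_simp
      rw [this]
      simp
    · intro S
      by_cases hn : none ∈ S
      · rw [w, if_pos hn]
        apply maxW_le ht hI
        intro X hX hXE
        rcases hX with hX | rfl
        · have hXsub : insert none (X.image some) ⊆ S := by
            intro o ho
            rcases Finset.mem_insert.1 ho with rfl | ho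
            · exact hn
            · rcases Finset.mem_image.1 ho with ⟨a, haX, rfl⟩
              exact Finset.mem_eraseNone.1 (hXE haX)
          have step1 : val (Sum.elim t fun _ => I) X ≤
              ∑ o ∈ insert none (X.image some),
                (fun o => Option.elim o I
                  (Sum.elim (fun i => t i * (1 - I / T)) (fun _ => 0))) o := by
            rw [Finset.sum_insert (by simp), Finset.sum_image (by simp)]
            simp only [Option.elim]
            have hW : val (Sum.elim t fun _ => I) X ≤ T := val_texts_le ht hI X hX
            have hco : ∑ a ∈ X, Sum.elim (fun i => t i * (1 - I / T)) (fun _ => (0:ℝ)) a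
                = val (Sum.elim t fun _ => I) X * (1 - I / T) := by
              rw [val, Finset.sum_mul]
              apply Finset.sum_congr rfl
              intro a ha
              rcases hX a ha with ⟨i, rfl⟩
              simp
            rw [hco]
            have h6 : T * (I / T) = I := by field_simp
            have h7 : 0 ≤ I / T := div_nonneg hI.le hT.le
            nlinarith [mul_le_mul_of_nonneg_right hW h7]
          refine step1.trans (Finset.sum_le_sum_of_subset_of_nonneg hXsub ?_)
          intro o _ _
          match o with
          | none => exact hI.le
          | some (Sum.inl i) =>
            have : I / T ≤ 1 := (div_le_one hT).2 hIT
            simp only [Option.elim, Sum.elim_inl]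
            exact mul_nonneg (ht i).le (by linarith)
          | some (Sum.inr _) => simp
        · rw [val_img]
          have := Finset.single_le_sum (f := fun o => Option.elim o I
              (Sum.elim (fun i => t i * (1 - I / T)) (fun _ => (0:ℝ)))) ?_ hn
          · simpa using this
          · intro o _
            match o with
            | none => exact hI.le
            | some (Sum.inl i) =>
              have : I / T ≤ 1 := (div_le_one hT).2 hIT
              simp only [Option.elim, Sum.elim_inl]
              exact mul_nonneg (ht i).le (by linarith)
            | some (Sum.inr _) => simp
      · rw [w, if_neg hn]
        apply Finset.sum_nonneg
        intro o _
        match o with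
        | none => exact hI.le
        | some (Sum.inl i) =>
          have : I / T ≤ 1 := (div_le_one hT).2 hIT
          simp only [Option.elim, Sum.elim_inl]
          exact mul_nonneg (ht i).le (by linarith)
        | some (Sum.inr _) => simp
    · simp [min_eq_right hIT]
  · -- image value large: auctioneer gets T
    refine ⟨fun o => o.elim T (Sum.elim (fun _ => 0) (fun _ => I - T)), ⟨?_, ?_, ?_⟩, ?_⟩
    · intro o
      match o with
      | none => exact hT.le
      | some (Sum.inl i) => simp
      | some (Sum.inr _) => simp only [Option.elim, Sum.elim_inr]; linarith
    · rw [w_univ ht hI, max_eq_right hTI, Fintype.sum_option]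
      simp only [Option.elim]
      rw [Fintype.sum_sum_type]
      simp
    · intro S
      have hnn : ∀ o : Option (Fin k ⊕ Unit), (0:ℝ) ≤ Option.elim o T (Sum.elim (fun _ => (0:ℝ)) (fun _ => I - T)) := by
        intro o
        match o with
        | none => exact hT.le
        | some (Sum.inl i) => simp
        | some (Sum.inr _) => simp only [Option.elim, Sum.elim_inr]; linarith
      by_cases hn : none ∈ S
      · rw [w, if_pos hn]
        apply maxW_le ht hI
        intro X hX hXE
        rcases hX with hX | rfl
        · have hW : val (Sum.elim t fun _ => I) X ≤ T := val_texts_le ht hI X hX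
          have h8 := Finset.single_le_sum (f := fun o => Option.elim o T
              (Sum.elim (fun _ => (0:ℝ)) (fun _ => I - T))) (fun o _ => hnn o) hn
          simp only [Option.elim] at h8
          exact hW.trans h8
        · rw [val_img]
          have himg : some (Sum.inr ()) ∈ S :=
            Finset.mem_eraseNone.1 (hXE (Finset.mem_singleton_self _))
          have hpair : ({none, some (Sum.inr ())} : Finset (Option (Fin k ⊕ Unit))) ⊆ S := by
            intro o ho
            rcases Finset.mem_insert.1 ho with rfl | ho
            · exact hn
            · rw [Finset.mem_singleton.1 ho]; exact himg
          have h9 := Finset.sum_le_sum_of_subset_of_nonneg hpair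
            (fun o _ _ => hnn o)
          rw [Finset.sum_pair (by simp)] at h9
          simpa using h9
      · rw [w, if_neg hn]
        exact Finset.sum_nonneg fun o _ => hnn o
    · simp [min_eq_left hTI]

lemma coreRev_eq (hk : 0 < k) (ht : ∀ i, 0 < t i) (hI : 0 < I) :
    CoreRev (Feas1 k) (Sum.elim t fun _ => I) = min (∑ i, t i) I := by
  obtain ⟨u, hu, hun⟩ := core_witness hk ht hI
  apply le_antisymm
  · apply csInf_le
    · refine ⟨min (∑ i, t i) I, ?_⟩
      rintro r ⟨u', hu', rfl⟩
      exact core_lb ht hI u' hu'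
    · exact ⟨u, ⟨hu, hun.symm⟩⟩
  · refine le_csInf ⟨u none, ?_⟩ ?_
    · exact ⟨u, hu, rfl⟩
    · rintro r ⟨u', hu', rfl⟩
      exact core_lb ht hI u' hu'

end Part2

lemma sum_eval {k : ℕ} (i : Fin k) (f : Fin k → ℝ) :
    ∑ a : Fin k → Fin k, f (a i) = (k:ℝ)^(k-1) * ∑ b, f b := by
  have master := Fintype.prod_sum (fun (j : Fin k) (b : Fin k) => if j = i then f b else (1:ℝ))
  have hR : ∀ a : Fin k → Fin k, (∏ j, if j = i then f (a j) else (1:ℝ)) = f (a i) := by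
    intro a
    rw [Finset.prod_eq_single i (fun b _ hb => if_neg hb) (fun h => absurd (Finset.mem_univ i) h)]
    rw [if_pos rfl]
  have hL : (∏ j : Fin k, ∑ b : Fin k, if j = i then f b else (1:ℝ))
      = (∑ b, f b) * (k:ℝ)^(k-1) := by
    have step : ∀ j : Fin k, (∑ b : Fin k, if j = i then f b else (1:ℝ))
        = if j = i then (∑ b, f b) else (k:ℝ) := by
      intro j
      split_ifs with h
      · rfl
      · simp
    calc (∏ j : Fin k, ∑ b : Fin k, if j = i then f b else (1:ℝ))
        = ∏ j : Fin k, (if j = i then (∑ b, f b) else (k:ℝ)) := Finset.prod_congr rfl (fun j _ => step j)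
      _ = (if i = i then (∑ b, f b) else (k:ℝ)) *
            ∏ j ∈ Finset.univ.erase i, (if j = i then (∑ b, f b) else (k:ℝ)) :=
          (Finset.mul_prod_erase _ _ (Finset.mem_univ i)).symm
      _ = (∑ b, f b) * (k:ℝ)^(k-1) := by
          rw [if_pos rfl]
          congr 1
          rw [Finset.prod_congr rfl (fun j hj => if_neg (Finset.mem_erase.1 hj).1),
            Finset.prod_const, Finset.card_erase_of_mem (Finset.mem_univ i), Finset.card_univ,
            Fintype.card_fin]
  calc ∑ a : Fin k → Fin k, f (a i)
      = ∑ a : Fin k → Fin k, ∏ j, if j = i then f (a j) else (1:ℝ) :=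
        (Finset.sum_congr rfl (fun a _ => (hR a))).symm
    _ = (k:ℝ)^(k-1) * ∑ b, f b := by rw [← master, hL, mul_comm]

lemma sum_eval_pair {k : ℕ} {i j : Fin k} (hij : i ≠ j) (f : Fin k → ℝ) :
    ∑ a : Fin k → Fin k, f (a i) * f (a j)
      = (k:ℝ)^(k-2) * ((∑ b, f b) * (∑ b, f b)) := by
  have master := Fintype.prod_sum
    (fun (l : Fin k) (b : Fin k) => if l = i then f b else if l = j then f b else (1:ℝ))
  have hjmem : j ∈ Finset.univ.erase i := Finset.mem_erase.2 ⟨hij.symm, Finset.mem_univ _⟩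
  have hR : ∀ a : Fin k → Fin k,
      (∏ l, if l = i then f (a l) else if l = j then f (a l) else (1:ℝ))
        = f (a i) * f (a j) := by
    intro a
    rw [← Finset.mul_prod_erase _ _ (Finset.mem_univ i), if_pos rfl,
      ← Finset.mul_prod_erase _ _ hjmem, if_neg hij.symm, if_pos rfl]
    have : ∀ l ∈ (Finset.univ.erase i).erase j,
        (if l = i then f (a l) else if l = j then f (a l) else (1:ℝ)) = 1 := by
      intro l hl
      have h1 := (Finset.mem_erase.1 hl).1
      have h2 := (Finset.mem_erase.1 (Finset.mem_erase.1 hl).2).1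
      rw [if_neg h2, if_neg h1]
    rw [Finset.prod_congr rfl this, Finset.prod_const_one, mul_one]
  have hL : (∏ l : Fin k, ∑ b : Fin k, if l = i then f b else if l = j then f b else (1:ℝ))
      = (∑ b, f b) * ((∑ b, f b) * (k:ℝ)^(k-2)) := by
    have step : ∀ l : Fin k, (∑ b : Fin k, if l = i then f b else if l = j then f b else (1:ℝ))
        = if l = i then (∑ b, f b) else if l = j then (∑ b, f b) else (k:ℝ) := by
      intro l
      split_ifs with h1 h2
      · rfl
      · rfl
      · simp
    rw [Finset.prod_congr rfl (fun l _ => step l),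
      ← Finset.mul_prod_erase _ _ (Finset.mem_univ i), if_pos rfl,
      ← Finset.mul_prod_erase _ _ hjmem, if_neg hij.symm, if_pos rfl]
    congr 2
    have : ∀ l ∈ (Finset.univ.erase i).erase j,
        (if l = i then (∑ b, f b) else if l = j then (∑ b, f b) else (k:ℝ)) = (k:ℝ) := by
      intro l hl
      have h1 := (Finset.mem_erase.1 hl).1
      have h2 := (Finset.mem_erase.1 (Finset.mem_erase.1 hl).2).1
      rw [if_neg h2, if_neg h1]
    rw [Finset.prod_congr rfl this, Finset.prod_const,
      Finset.card_erase_of_mem hjmem, Finset.card_erase_of_mem (Finset.mem_univ i),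
      Finset.card_univ, Fintype.card_fin, Nat.sub_sub]
  calc ∑ a : Fin k → Fin k, f (a i) * f (a j)
      = ∑ a : Fin k → Fin k, ∏ l, if l = i then f (a l) else if l = j then f (a l) else (1:ℝ) :=
        (Finset.sum_congr rfl (fun a _ => (hR a))).symm
    _ = (k:ℝ)^(k-2) * ((∑ b, f b) * (∑ b, f b)) := by rw [← master, hL]; ring

lemma card_fun_univ (k : ℕ) :
    ((Finset.univ : Finset (Fin k → Fin k)).card : ℝ) = (k:ℝ)^k := by
  rw [Finset.card_univ]
  rw [show Fintype.card (Fin k → Fin k) = k^k by simp [Fintype.card_fun]]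
  push_cast
  ring


lemma Hk_eq_harmonic (n : ℕ) : Hk n = (harmonic n : ℝ) := by
  rw [Hk, harmonic]
  push_cast
  simp [one_div]

lemma log_le_Hk (n : ℕ) : Real.log (n + 1) ≤ Hk n := by
  rw [Hk_eq_harmonic]
  exact_mod_cast log_add_one_le_harmonic n

lemma sq_harm_le (n : ℕ) :
    ∑ j ∈ Finset.range n, (1 / ((j:ℝ) + 1)) * (1 / ((j:ℝ) + 1)) ≤ 2 - 2 / (n + 1) := by
  induction n with
  | zero => norm_num
  | succ n ih =>
    rw [Finset.sum_range_succ]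
    have h1 : (0:ℝ) < n + 1 := by positivity
    have h2 : (0:ℝ) < n + 2 := by positivity
    have key : (1 / ((n:ℝ) + 1)) * (1 / ((n:ℝ) + 1)) ≤ 2 / ((n:ℝ)+1) - 2 / ((n:ℝ)+2) := by
      have e : 2/((n:ℝ)+1) - 2/((n:ℝ)+2) = 2/(((n:ℝ)+1)*((n:ℝ)+2)) := by
        field_simp
        ring
      rw [e, div_mul_div_comm, one_mul, div_le_div_iff₀ (by positivity) (by positivity)]
      nlinarith [sq_nonneg ((n:ℝ))]
    push_cast
    have e2 : ((n:ℝ) + 1 + 1) = (n:ℝ) + 2 := by ring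
    rw [e2]
    linarith

lemma min_lb (q T x : ℝ) (hx0 : 0 ≤ x) (hx : x ≤ q + 1) (hT : 0 ≤ T) :
    x - 1 - max (q - T) 0 ≤ min T x := by
  rcases le_total x T with h | h
  · rw [min_eq_right h]
    have := le_max_right (q - T) 0
    linarith
  · rw [min_eq_left h]
    rcases le_total T q with h2 | h2
    · have := le_max_left (q - T) 0
      linarith
    · have := le_max_right (q - T) 0
      linarith

lemma max_le_quad (y : ℝ) : max y 0 ≤ (y^2 + 2) / (2 * Real.sqrt 2) := by
  have hs : Real.sqrt 2 ^ 2 = 2 := Real.sq_sqrt (by norm_num)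
  have hpos : 0 < Real.sqrt 2 := Real.sqrt_pos.2 (by norm_num)
  rcases le_total y 0 with h | h
  · rw [max_eq_right h]
    positivity
  · rw [max_eq_left h]
    rw [le_div_iff₀ (by positivity)]
    nlinarith [sq_nonneg (y - Real.sqrt 2)]

lemma var_le {k : ℕ} (hk : 2 ≤ k) :
    ∑ a : Fin k → Fin k, (Hk k - ∑ i, tprof k a i)^2 ≤ 2 * (k:ℝ)^k := by
  set f : Fin k → ℝ := fun b => 1 / ((b:ℕ) + 1) with hf
  have hT : ∀ a : Fin k → Fin k, (∑ i, tprof k a i) = ∑ i, f (a i) := fun a => rfl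
  have hF : ∑ b, f b = Hk k := by
    rw [Hk, ← Fin.sum_univ_eq_sum_range (fun j => (1:ℝ) / (j + 1)) k]
  set F := Hk k with hFdef
  set Q := ∑ b, f b * f b with hQdef
  have hQ2 : Q ≤ 2 := by
    have := sq_harm_le k
    have hQr : Q = ∑ j ∈ Finset.range k, (1 / ((j:ℝ) + 1)) * (1 / ((j:ℝ) + 1)) := by
      rw [hQdef, ← Fin.sum_univ_eq_sum_range (fun j => (1:ℝ) / (j + 1) * (1 / (j+1))) k]
    have hpos : (0:ℝ) < k + 1 := by positivity
    have : (0:ℝ) ≤ 2 / (k+1) := by positivity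
    linarith [sq_harm_le k, hQr ▸ (sq_harm_le k)]
  have hQ0 : 0 ≤ Q := Finset.sum_nonneg fun b _ => mul_self_nonneg _
  -- pointwise expansion
  have hpt : ∀ a : Fin k → Fin k,
      (F - ∑ i, f (a i))^2
        = F^2 - 2*F*(∑ i, f (a i)) + ∑ i, ∑ i', f (a i) * f (a i') := by
    intro a
    rw [← Finset.sum_mul_sum]
    ring
  -- sum of T
  have hB : ∑ a : Fin k → Fin k, (∑ i, f (a i)) = (k:ℝ)^k * F := by
    rw [Finset.sum_comm]
    have : ∀ i : Fin k, ∑ a : Fin k → Fin k, f (a i) = (k:ℝ)^(k-1) * F := by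
      intro i; rw [sum_eval i f, hF]
    rw [Finset.sum_congr rfl (fun i _ => this i), Finset.sum_const, Finset.card_univ,
      Fintype.card_fin, nsmul_eq_mul]
    have hk1 : k - 1 + 1 = k := by omega
    calc (k:ℝ) * ((k:ℝ)^(k-1) * F) = (k:ℝ)^(k-1) * (k:ℝ) * F := by ring
      _ = (k:ℝ)^k * F := by rw [← pow_succ, hk1]
  -- sum of T*T
  have hA : ∑ a : Fin k → Fin k, (∑ i, ∑ i', f (a i) * f (a i'))
      = (k:ℝ)^k * Q + ((k:ℝ)^k - (k:ℝ)^(k-1)) * (F * F) := by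
    rw [Finset.sum_comm]
    have inner : ∀ i : Fin k, ∑ a : Fin k → Fin k, (∑ i', f (a i) * f (a i'))
        = (k:ℝ)^(k-1) * Q + ((k - 1 : ℕ) : ℝ) * ((k:ℝ)^(k-2) * (F * F)) := by
      intro i
      rw [Finset.sum_comm]
      rw [← Finset.add_sum_erase _ _ (Finset.mem_univ i)]
      have hdiag : ∑ a : Fin k → Fin k, f (a i) * f (a i) = (k:ℝ)^(k-1) * Q := by
        rw [show (fun a : Fin k → Fin k => f (a i) * f (a i))
            = (fun a : Fin k → Fin k => (fun b => f b * f b) (a i)) from rfl]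
        rw [sum_eval i (fun b => f b * f b), hQdef]
      have hoff : ∀ i' ∈ Finset.univ.erase i,
          ∑ a : Fin k → Fin k, f (a i) * f (a i') = (k:ℝ)^(k-2) * (F * F) := by
        intro i' hi'
        have hne : i ≠ i' := fun h => (Finset.mem_erase.1 hi').1 h.symm
        rw [sum_eval_pair hne f, hF]
      rw [hdiag, Finset.sum_congr rfl hoff, Finset.sum_const,
        Finset.card_erase_of_mem (Finset.mem_univ i), Finset.card_univ, Fintype.card_fin,
        nsmul_eq_mul]
    rw [Finset.sum_congr rfl (fun i _ => inner i), Finset.sum_const, Finset.card_univ,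
      Fintype.card_fin, nsmul_eq_mul]
    have hk1 : k - 1 + 1 = k := by omega
    have hk2' : k - 2 + 1 = k - 1 := by omega
    have e1 : (k:ℝ) * (k:ℝ)^(k-1) = (k:ℝ)^k := by
      rw [mul_comm, ← pow_succ, hk1]
    have e2 : (k:ℝ) * (k:ℝ)^(k-2) = (k:ℝ)^(k-1) := by
      rw [mul_comm, ← pow_succ, hk2']
    have e3 : ((k - 1 : ℕ) : ℝ) = (k:ℝ) - 1 := by
      rw [Nat.cast_sub (by omega : 1 ≤ k)]
      norm_num
    rw [e3]
    calc (k:ℝ) * ((k:ℝ)^(k-1) * Q + ((k:ℝ) - 1) * ((k:ℝ)^(k-2) * (F * F)))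
        = ((k:ℝ) * (k:ℝ)^(k-1)) * Q
          + (((k:ℝ) * (k:ℝ)^(k-2)) * (k:ℝ) - (k:ℝ) * (k:ℝ)^(k-2)) * (F * F) := by ring
      _ = (k:ℝ)^k * Q + ((k:ℝ)^(k-1) * (k:ℝ) - (k:ℝ)^(k-1)) * (F * F) := by rw [e1, e2]
      _ = (k:ℝ)^k * Q + ((k:ℝ)^k - (k:ℝ)^(k-1)) * (F * F) := by
          rw [← pow_succ, hk1]
  have hcard : ((Finset.univ : Finset (Fin k → Fin k)).card : ℝ) = (k:ℝ)^k :=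
    card_fun_univ k
  calc ∑ a : Fin k → Fin k, (F - ∑ i, tprof k a i)^2
      = ∑ a : Fin k → Fin k,
          (F^2 - 2*F*(∑ i, f (a i)) + ∑ i, ∑ i', f (a i) * f (a i')) := by
        apply Finset.sum_congr rfl
        intro a _
        rw [hT a, hpt a]
    _ = (∑ a : Fin k → Fin k, (F^2 - 2*F*(∑ i, f (a i))))
        + ∑ a : Fin k → Fin k, (∑ i, ∑ i', f (a i) * f (a i')) := Finset.sum_add_distrib
    _ = ((∑ a : Fin k → Fin k, F^2) - 2*F*(∑ a : Fin k → Fin k, (∑ i, f (a i))))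
        + ((k:ℝ)^k * Q + ((k:ℝ)^k - (k:ℝ)^(k-1)) * (F * F)) := by
        rw [Finset.sum_sub_distrib, ← Finset.mul_sum, hA]
    _ = ((k:ℝ)^k * F^2 - 2*F*((k:ℝ)^k * F))
        + ((k:ℝ)^k * Q + ((k:ℝ)^k - (k:ℝ)^(k-1)) * (F * F)) := by
        rw [Finset.sum_const, nsmul_eq_mul, hcard, hB]
    _ = (k:ℝ)^k * Q - (k:ℝ)^(k-1) * (F * F) := by ring
    _ ≤ 2 * (k:ℝ)^k := by
        have h1 : (0:ℝ) ≤ (k:ℝ)^(k-1) * (F * F) :=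
          mul_nonneg (pow_nonneg (Nat.cast_nonneg k) _) (mul_self_nonneg F)
        have h2 : (0:ℝ) ≤ (k:ℝ)^k := by positivity
        nlinarith


lemma tp_nonneg {k : ℕ} (a : Fin k → Fin k) : (0:ℝ) ≤ ∑ i, tprof k a i :=
  Finset.sum_nonneg fun i _ => by simp only [tprof]; positivity

lemma part1 {k : ℕ} (hk : ⌈Real.exp (Real.exp 5)⌉₊ ≤ k) :
    1/2 * Real.log (Real.log k) ≤
      (∑ a : Fin k → Fin k, ∑ cI : Fin (Hceil k),
          min (∑ i, tprof k a i) (imval k cI)) /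
        ((k : ℝ) ^ k * (Hceil k : ℝ)) := by
  have hek : Real.exp (Real.exp 5) ≤ (k:ℝ) :=
    le_trans (Nat.le_ceil _) (Nat.cast_le.2 hk)
  have h6 : (6:ℝ) ≤ Real.exp 5 := by nlinarith [Real.add_one_le_exp (5:ℝ)]
  have h7 : (7:ℝ) ≤ (k:ℝ) := by
    have he := Real.exp_le_exp.2 h6
    nlinarith [Real.add_one_le_exp (6:ℝ)]
  have hk2 : 2 ≤ k := by
    have : (2:ℝ) ≤ (k:ℝ) := by linarith
    exact_mod_cast this
  have hkpos : 0 < k := by omega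
  have hkR : (0:ℝ) < k := by linarith
  have hlogk : Real.exp 5 ≤ Real.log k := (Real.le_log_iff_exp_le hkR).2 hek
  have hlogpos : (0:ℝ) < Real.log k := by linarith
  have hll : 5 ≤ Real.log (Real.log k) := (Real.le_log_iff_exp_le hlogpos).2 hlogk
  -- harmonic facts
  have hq1 : 1 ≤ Hk k := by
    rw [Hk]
    have h0 : (0:ℕ) ∈ Finset.range k := Finset.mem_range.2 hkpos
    have := Finset.single_le_sum (f := fun j : ℕ => (1:ℝ)/(j+1))
      (fun j _ => by positivity) h0
    simpa using this
  have hq0 : (0:ℝ) ≤ Hk k := by linarith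
  have hqH : Hk k ≤ (Hceil k : ℝ) := Nat.le_ceil _
  have hHle : (Hceil k : ℝ) ≤ Hk k + 1 := le_of_lt (Nat.ceil_lt_add_one hq0)
  have hHR : (0:ℝ) < (Hceil k : ℝ) := by linarith
  have hkk : (0:ℝ) < (k:ℝ)^k := by positivity
  -- Hk (Hceil k) dominates log log k
  have hlogH : Real.log (Real.log k) ≤ Hk (Hceil k) := by
    have l2 : Real.log ((k:ℝ)+1) ≤ Hk k := log_le_Hk k
    have l1 : Real.log k ≤ (Hceil k : ℝ) + 1 := by
      have : Real.log k ≤ Real.log ((k:ℝ)+1) := Real.log_le_log hkR (by linarith)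
      linarith
    calc Real.log (Real.log k) ≤ Real.log ((Hceil k : ℝ)+1) :=
          Real.log_le_log hlogpos l1
      _ ≤ Hk (Hceil k) := log_le_Hk (Hceil k)
  -- sqrt 2 facts
  have hm2 : Real.sqrt 2 * Real.sqrt 2 = 2 := Real.mul_self_sqrt (by norm_num)
  have hs2nn : (0:ℝ) ≤ Real.sqrt 2 := Real.sqrt_nonneg 2
  have hs2 : Real.sqrt 2 ≤ 3/2 := by nlinarith
  -- pointwise bound
  have hpt : ∀ (a : Fin k → Fin k) (c : Fin (Hceil k)),
      imval k c - 1 - max (Hk k - ∑ i, tprof k a i) 0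
        ≤ min (∑ i, tprof k a i) (imval k c) := by
    intro a c
    apply min_lb
    · show (0:ℝ) ≤ (Hceil k : ℝ) / ((c:ℕ) + 1)
      positivity
    · show (Hceil k : ℝ) / ((c:ℕ) + 1) ≤ Hk k + 1
      have : (Hceil k : ℝ) / ((c:ℕ) + 1) ≤ (Hceil k : ℝ) := by
        apply div_le_self hHR.le
        have : (0:ℝ) ≤ ((c:ℕ):ℝ) := Nat.cast_nonneg _
        linarith
      linarith
    · exact tp_nonneg a
  -- sum of imval
  have himsum : ∑ c : Fin (Hceil k), imval k c = (Hceil k : ℝ) * Hk (Hceil k) := by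
    have : ∀ c : Fin (Hceil k), imval k c = (Hceil k : ℝ) * (1 / ((c:ℕ) + 1)) := by
      intro c
      rw [imval]
      ring
    rw [Finset.sum_congr rfl (fun c _ => this c), ← Finset.mul_sum, Hk,
      ← Fin.sum_univ_eq_sum_range (fun j => (1:ℝ) / (j + 1)) (Hceil k)]
  -- per-profile bound
  have hstepA : ∀ a : Fin k → Fin k,
      (Hceil k : ℝ) * Hk (Hceil k) - (Hceil k : ℝ)
          - (Hceil k : ℝ) * max (Hk k - ∑ i, tprof k a i) 0
        ≤ ∑ c : Fin (Hceil k), min (∑ i, tprof k a i) (imval k c) := by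
    intro a
    have h1 : ∑ c : Fin (Hceil k),
        (imval k c - (1 + max (Hk k - ∑ i, tprof k a i) 0))
        ≤ ∑ c : Fin (Hceil k), min (∑ i, tprof k a i) (imval k c) := by
      apply Finset.sum_le_sum
      intro c _
      have := hpt a c
      linarith
    have h2 : ∑ c : Fin (Hceil k),
        (imval k c - (1 + max (Hk k - ∑ i, tprof k a i) 0))
        = (Hceil k : ℝ) * Hk (Hceil k)
          - (Hceil k : ℝ) * (1 + max (Hk k - ∑ i, tprof k a i) 0) := by
      rw [Finset.sum_sub_distrib, himsum, Finset.sum_const, Finset.card_univ,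
        Fintype.card_fin, nsmul_eq_mul]
    rw [h2] at h1
    have := le_max_right (Hk k - ∑ i, tprof k a i) (0:ℝ)
    nlinarith [le_max_right (Hk k - ∑ i, tprof k a i) (0:ℝ)]
  -- bound on sum of maxes
  have hD : ∑ a : Fin k → Fin k, max (Hk k - ∑ i, tprof k a i) 0
      ≤ Real.sqrt 2 * (k:ℝ)^k := by
    have c1 : ∑ a : Fin k → Fin k, max (Hk k - ∑ i, tprof k a i) 0
        ≤ ∑ a : Fin k → Fin k,
            ((Hk k - ∑ i, tprof k a i)^2 + 2) / (2 * Real.sqrt 2) :=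
      Finset.sum_le_sum fun a _ => max_le_quad _
    have c2 : ∑ a : Fin k → Fin k,
        ((Hk k - ∑ i, tprof k a i)^2 + 2) / (2 * Real.sqrt 2)
        = ((∑ a : Fin k → Fin k, (Hk k - ∑ i, tprof k a i)^2) + 2 * (k:ℝ)^k)
            / (2 * Real.sqrt 2) := by
      rw [← Finset.sum_div, Finset.sum_add_distrib, Finset.sum_const, nsmul_eq_mul,
        card_fun_univ]
      ring
    have c3 : ((∑ a : Fin k → Fin k, (Hk k - ∑ i, tprof k a i)^2) + 2 * (k:ℝ)^k)
          / (2 * Real.sqrt 2)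
        ≤ (2 * (k:ℝ)^k + 2 * (k:ℝ)^k) / (2 * Real.sqrt 2) := by
      have hv := var_le hk2
      exact (div_le_div_iff_of_pos_right (by positivity)).2 (by linarith)
    have c4 : (2 * (k:ℝ)^k + 2 * (k:ℝ)^k) / (2 * Real.sqrt 2)
        = Real.sqrt 2 * (k:ℝ)^k := by
      rw [div_eq_iff (by positivity : (2 * Real.sqrt 2) ≠ 0)]
      linear_combination (-2*(k:ℝ)^k) * hm2
    calc ∑ a : Fin k → Fin k, max (Hk k - ∑ i, tprof k a i) 0
        ≤ _ := c1
      _ = _ := c2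
      _ ≤ _ := c3
      _ = _ := c4
  -- total bound
  have hS : (k:ℝ)^k * (Hceil k : ℝ) * (Hk (Hceil k) - 1 - Real.sqrt 2)
      ≤ ∑ a : Fin k → Fin k, ∑ cI : Fin (Hceil k),
          min (∑ i, tprof k a i) (imval k cI) := by
    have h1 : ∑ a : Fin k → Fin k,
        ((Hceil k : ℝ) * Hk (Hceil k) - (Hceil k : ℝ)
          - (Hceil k : ℝ) * max (Hk k - ∑ i, tprof k a i) 0)
        ≤ ∑ a : Fin k → Fin k, ∑ cI : Fin (Hceil k),
            min (∑ i, tprof k a i) (imval k cI) :=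
      Finset.sum_le_sum fun a _ => hstepA a
    have h2 : ∑ a : Fin k → Fin k,
        ((Hceil k : ℝ) * Hk (Hceil k) - (Hceil k : ℝ)
          - (Hceil k : ℝ) * max (Hk k - ∑ i, tprof k a i) 0)
        = (k:ℝ)^k * ((Hceil k : ℝ) * Hk (Hceil k) - (Hceil k : ℝ))
          - (Hceil k : ℝ) * ∑ a : Fin k → Fin k, max (Hk k - ∑ i, tprof k a i) 0 := by
      rw [Finset.sum_sub_distrib, Finset.sum_const, nsmul_eq_mul, card_fun_univ,
        ← Finset.mul_sum]
    rw [h2] at h1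
    have h3 : (Hceil k : ℝ) * (∑ a : Fin k → Fin k, max (Hk k - ∑ i, tprof k a i) 0)
        ≤ (Hceil k : ℝ) * (Real.sqrt 2 * (k:ℝ)^k) :=
      mul_le_mul_of_nonneg_left hD hHR.le
    nlinarith
  -- conclude
  rw [le_div_iff₀ (by positivity)]
  have key : 1/2 * Real.log (Real.log k) ≤ Hk (Hceil k) - 1 - Real.sqrt 2 := by
    nlinarith
  calc 1/2 * Real.log (Real.log k) * ((k:ℝ)^k * (Hceil k : ℝ))
      ≤ (Hk (Hceil k) - 1 - Real.sqrt 2) * ((k:ℝ)^k * (Hceil k : ℝ)) :=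
        mul_le_mul_of_nonneg_right key (by positivity)
    _ = (k:ℝ)^k * (Hceil k : ℝ) * (Hk (Hceil k) - 1 - Real.sqrt 2) := by ring
    _ ≤ _ := hS


end CoreComp

open CoreComp

/-- The expected core revenue benchmark under the distribution `D` is
doubly logarithmic: there are `c > 0` and `k₀` such that for every `k ≥ k₀`,
`E_{v∼D}[min(∑ᵢ v^T_i, v^I)] ≥ c·ln(ln k)`; moreover, for each realized profile of `D`
the core revenue benchmark equals `min(∑ᵢ v^T_i, v^I)`. -/
theorem expected_core_rev_lb :
    ∃ c : ℝ, 0 < c ∧ ∃ k₀ : ℕ, ∀ k : ℕ, k₀ ≤ k →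
      (c * Real.log (Real.log k) ≤
        (∑ a : Fin k → Fin k, ∑ cI : Fin (Hceil k),
            min (∑ i, tprof k a i) (imval k cI)) /
          ((k : ℝ) ^ k * (Hceil k : ℝ))) ∧
      ∀ (a : Fin k → Fin k) (cI : Fin (Hceil k)),
        CoreRev (Feas1 k) (Sum.elim (tprof k a) (fun _ => imval k cI)) =
          min (∑ i, tprof k a i) (imval k cI) := by
  refine ⟨1/2, by norm_num, ⌈Real.exp (Real.exp 5)⌉₊, fun k hk => ⟨part1 hk, ?_⟩⟩
  intro a cI
  have hek : Real.exp (Real.exp 5) ≤ (k:ℝ) :=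
    le_trans (Nat.le_ceil _) (Nat.cast_le.2 hk)
  have h6 : (6:ℝ) ≤ Real.exp 5 := by nlinarith [Real.add_one_le_exp (5:ℝ)]
  have h7 : (7:ℝ) ≤ (k:ℝ) := by
    have he := Real.exp_le_exp.2 h6
    nlinarith [Real.add_one_le_exp (6:ℝ)]
  have hkpos : 0 < k := by
    have : (1:ℝ) ≤ (k:ℝ) := by linarith
    exact_mod_cast Nat.one_le_cast.1 (by exact_mod_cast this)
  have hHpos : 0 < Hceil k := cI.pos
  apply coreRev_eq hkpos
  · intro i
    simp only [tprof]
    positivity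
  · show (0:ℝ) < (Hceil k : ℝ) / ((cI:ℕ) + 1)
    have : (0:ℝ) < (Hceil k : ℝ) := by exact_mod_cast hHpos
    positivity
end
end
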